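/- arXiv:2003.05216 — 5 statements merged into one kernel-verified Lean document; each statement's English description precedes it below -/
import Mathlib

section
/- Let u : ℝ → ℝ be continuously differentiable with compact support. Then the Lebesgue measure (in ℝ²) of the set {(x,y) ∈ ℝ × ℝ : |u(x) - u(y)| ≥ |x - y|²} is at most C ∫_ℝ |u'(t)| dt, where C is a universal constant (independent of u). -/
/-!
By the fundamental theorem of calculus `|u x - u y| ≤ ∫_{[x, y]} |u'|`, so every off-diagonal
point `(x, y)` of the set lies in `I × I` for the interval `I = [x, y]`, which satisfies
`|I|² ≤ ∫_I |u'|`. The Vitali covering lemma selects pairwise disjoint such intervals whose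
fourfold enlargements `4I` cover all the others. Hence, off the null diagonal, the set is covered
by the squares `4I × 4I`, of area `16 |I|² ≤ 16 ∫_I |u'|`, and these sum to at most `16 ∫ |u'|`.
-/

open MeasureTheory Metric Set
open scoped Interval

lemma MeasureTheory.Measure.prod_setOf_fst_eq_snd (μ ν : Measure ℝ) [SFinite ν]
    [NullSingletonClass ν] :
    μ.prod ν {q : ℝ × ℝ | q.1 = q.2} = 0 := by
  rw [Measure.prod_apply (measurableSet_eq_fun measurable_fst measurable_snd)]
  simp [preimage]

lemma Real.uIcc_eq_closedBall (x y : ℝ) : uIcc x y = closedBall ((x + y) / 2) (|x - y| / 2) := by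
  rw [uIcc, Real.Icc_eq_closedBall, min_add_max, max_sub_min_eq_abs']

section CoveringByDisjointIntervals

variable {g : ℝ → ℝ} {c r : ℝ}

lemma volume_closedBall_prod_closedBall_le (hg : IntegrableOn g (closedBall c r))
    (hg0 : 0 ≤ᵐ[volume.restrict (closedBall c r)] g)
    (h : (2 * r) ^ 2 ≤ ∫ s in closedBall c r, g s) :
    volume (closedBall c (4 * r) ×ˢ closedBall c (4 * r))
      ≤ 16 * ∫⁻ s in closedBall c r, ENNReal.ofReal (g s) := by
  rcases lt_or_ge r 0 with hr | hr
  · simp [closedBall_eq_empty.2 (by linarith : 4 * r < 0)]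
  rw [Measure.volume_eq_prod, Measure.prod_prod, Real.volume_closedBall,
    ← ofReal_integral_eq_lintegral_ofReal hg hg0, ← ENNReal.ofReal_mul (by positivity),
    ← ENNReal.ofReal_ofNat, ← ENNReal.ofReal_mul (by norm_num)]
  exact ENNReal.ofReal_le_ofReal (by nlinarith)

theorem volume_biUnion_closedBall_prod_closedBall_le (hg : Integrable g) (hg0 : 0 ≤ᵐ[volume] g)
    (t : Set (ℝ × ℝ)) (ht_pos : ∀ a ∈ t, 0 < a.2)
    (ht : ∀ a ∈ t, (2 * a.2) ^ 2 ≤ ∫ s in closedBall a.1 a.2, g s) :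
    volume (⋃ a ∈ t, closedBall a.1 a.2 ×ˢ closedBall a.1 a.2)
      ≤ ENNReal.ofReal (16 * ∫ s, g s) := by
  have hradius : ∀ a ∈ t, a.2 ≤ √(∫ s, g s) := fun a ha =>
    le_abs_self _ |>.trans <| Real.abs_le_sqrt <| by
      nlinarith [ht a ha, setIntegral_le_integral (s := closedBall a.1 a.2) hg hg0]
  obtain ⟨u, hut, hu_disj, hu_cover⟩ :=
    Vitali.exists_disjoint_subfamily_covering_enlargement_closedBall t Prod.fst Prod.snd _
      hradius 4 (by norm_num)
  have hu_count : u.Countable := hu_disj.countable_of_nonempty_interior fun a ha =>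
    (nonempty_ball.2 (ht_pos a (hut ha))).mono ball_subset_interior_closedBall
  have hcover : (⋃ a ∈ t, closedBall a.1 a.2 ×ˢ closedBall a.1 a.2)
      ⊆ ⋃ b ∈ u, closedBall b.1 (4 * b.2) ×ˢ closedBall b.1 (4 * b.2) :=
    iUnion₂_subset fun a ha => by
      obtain ⟨b, hb, hab⟩ := hu_cover a ha
      exact (prod_mono hab hab).trans (subset_biUnion_of_mem
        (u := fun b : ℝ × ℝ => closedBall b.1 (4 * b.2) ×ˢ closedBall b.1 (4 * b.2)) hb)
  calc volume (⋃ a ∈ t, closedBall a.1 a.2 ×ˢ closedBall a.1 a.2)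
      ≤ ∑' b : u, volume (closedBall b.1.1 (4 * b.1.2) ×ˢ closedBall b.1.1 (4 * b.1.2)) :=
        (measure_mono hcover).trans (measure_biUnion_le _ hu_count _)
    _ ≤ ∑' b : u, 16 * ∫⁻ s in closedBall b.1.1 b.1.2, ENNReal.ofReal (g s) :=
        ENNReal.tsum_le_tsum fun b => volume_closedBall_prod_closedBall_le hg.integrableOn
          (ae_restrict_of_ae hg0) (ht b (hut b.2))
    _ = 16 * ∫⁻ s in ⋃ b ∈ u, closedBall b.1 b.2, ENNReal.ofReal (g s) := by
        rw [ENNReal.tsum_mul_left,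
          lintegral_biUnion hu_count (fun _ _ => measurableSet_closedBall) hu_disj]
    _ ≤ 16 * ∫⁻ s, ENNReal.ofReal (g s) := by gcongr; exact Measure.restrict_le_self
    _ = ENNReal.ofReal (16 * ∫ s, g s) := by
        rw [ENNReal.ofReal_mul (by norm_num), ofReal_integral_eq_lintegral_ofReal hg hg0,
          ENNReal.ofReal_ofNat]

theorem volume_setOf_sq_le_setIntegral_uIoc_le (hg : Integrable g) (hg0 : 0 ≤ᵐ[volume] g) :
    volume {q : ℝ × ℝ | (q.1 - q.2) ^ 2 ≤ ∫ s in Ι q.1 q.2, g s}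
      ≤ ENNReal.ofReal (16 * ∫ s, g s) := by
  set t := {a : ℝ × ℝ | 0 < a.2 ∧ (2 * a.2) ^ 2 ≤ ∫ s in closedBall a.1 a.2, g s}
  have hcover : {q : ℝ × ℝ | (q.1 - q.2) ^ 2 ≤ ∫ s in Ι q.1 q.2, g s}
      ⊆ {q | q.1 = q.2} ∪ ⋃ a ∈ t, closedBall a.1 a.2 ×ˢ closedBall a.1 a.2 := by
    rintro ⟨x, y⟩ hq
    rcases eq_or_ne x y with hxy | hxy
    · exact Or.inl hxy
    refine Or.inr (mem_biUnion (x := ((x + y) / 2, |x - y| / 2)) ⟨?_, ?_⟩ ?_) <;>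
      simp only [← Real.uIcc_eq_closedBall]
    · exact half_pos (abs_pos.2 (sub_ne_zero.2 hxy))
    · calc (2 * (|x - y| / 2)) ^ 2 = (x - y) ^ 2 := by rw [mul_div_cancel₀ _ two_ne_zero, sq_abs]
        _ ≤ ∫ s in Ι x y, g s := hq
        _ ≤ ∫ s in uIcc x y, g s := setIntegral_mono_set hg.integrableOn
          (ae_restrict_of_ae hg0) uIoc_subset_uIcc.eventuallyLE
    · exact ⟨left_mem_uIcc, right_mem_uIcc⟩
  have hdiag : volume {q : ℝ × ℝ | q.1 = q.2} = 0 := by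
    rw [Measure.volume_eq_prod]; exact Measure.prod_setOf_fst_eq_snd _ _
  calc volume {q : ℝ × ℝ | (q.1 - q.2) ^ 2 ≤ ∫ s in Ι q.1 q.2, g s}
      ≤ volume {q : ℝ × ℝ | q.1 = q.2}
        + volume (⋃ a ∈ t, closedBall a.1 a.2 ×ˢ closedBall a.1 a.2) :=
        (measure_mono hcover).trans (measure_union_le _ _)
    _ ≤ ENNReal.ofReal (16 * ∫ s, g s) := by
        rw [hdiag, zero_add]
        exact volume_biUnion_closedBall_prod_closedBall_le hg hg0 t (fun _ ha => ha.1)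
          (fun _ ha => ha.2)

end CoveringByDisjointIntervals

theorem abs_sub_le_setIntegral_uIoc_abs_deriv {u : ℝ → ℝ} (hu : ContDiff ℝ 1 u) (x y : ℝ) :
    |u x - u y| ≤ ∫ t in Ι x y, |deriv u t| := by
  rw [abs_sub_comm, ← intervalIntegral.integral_deriv_eq_sub (f := u)
    (fun t _ => (hu.differentiable one_ne_zero).differentiableAt)
    ((hu.continuous_deriv le_rfl).intervalIntegrable x y)]
  exact intervalIntegral.norm_integral_le_integral_norm_uIoc (f := deriv u)

/-- There is a universal constant `C` such that for every `u ∈ C¹_c(ℝ)`, the planar Lebesgue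
measure of `{(x,y) : |u(x) - u(y)| ≥ |x - y|²}` is at most `C ∫_ℝ |u'|`. -/
theorem measure_set_le_of_C1c :
    ∃ C : ℝ, 0 < C ∧ ∀ u : ℝ → ℝ, ContDiff ℝ 1 u → HasCompactSupport u →
      volume {q : ℝ × ℝ | |u q.1 - u q.2| ≥ |q.1 - q.2| ^ 2}
        ≤ ENNReal.ofReal (C * ∫ t, |deriv u t|) := by
  refine ⟨16, by norm_num, fun u hu hc => ?_⟩
  have hint : Integrable fun t => |deriv u t| :=
    (hu.continuous_deriv le_rfl).abs.integrable_of_hasCompactSupport (hc.deriv.comp_left abs_zero)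
  refine (measure_mono fun q hq => ?_).trans
    (volume_setOf_sq_le_setIntegral_uIoc_le hint (ae_of_all _ fun t => abs_nonneg _))
  calc (q.1 - q.2) ^ 2 = |q.1 - q.2| ^ 2 := (sq_abs _).symm
    _ ≤ |u q.1 - u q.2| := hq
    _ ≤ ∫ t in Ι q.1 q.2, |deriv u t| := abs_sub_le_setIntegral_uIoc_abs_deriv hu _ _
end

section
/- For every N ≥ 1 there exists a constant c = c(N) > 0 such that for all 1 ≤ p < ∞ and all u ∈ C^∞_c(ℝ^N): c^p ‖∇u‖_{L^p(ℝ^N)}^p ≤ sup_{λ>0} λ^p · 𝓛^{2N}({(x,y) : x ≠ y, |u(x)-u(y)| ≥ λ |x-y|^{N/p+1}}). -/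
open MeasureTheory Metric
open scoped RealInnerProductSpace ENNReal

section aux
variable {E : Type*} [NormedAddCommGroup E] [NormedSpace ℝ E]

theorem taylor_aux {u : E → ℝ}
    (hu : ContDiff ℝ (⊤ : ℕ∞) u) {M : ℝ} (hM0 : 0 ≤ M)
    (hL : ∀ z w : E, ‖fderiv ℝ u z - fderiv ℝ u w‖ ≤ M * ‖z - w‖)
    (x y : E) : ‖u y - u x - (fderiv ℝ u x) (y - x)‖ ≤ M * (‖y - x‖ * ‖y - x‖) := by
  have hbound : ∀ z ∈ closedBall x ‖y - x‖, ‖fderiv ℝ u z - fderiv ℝ u x‖ ≤ M * ‖y - x‖ := by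
    intro z hz
    calc ‖fderiv ℝ u z - fderiv ℝ u x‖ ≤ M * ‖z - x‖ := hL z x
      _ ≤ M * ‖y - x‖ := by
          have : ‖z - x‖ ≤ ‖y - x‖ := by simpa [dist_eq_norm] using hz
          exact mul_le_mul_of_nonneg_left this hM0
  have h := (convex_closedBall x ‖y - x‖).norm_image_sub_le_of_norm_fderiv_le' (x := x) (y := y)
    (fun z _ => (hu.differentiable (by simp)).differentiableAt) hbound
    (mem_closedBall_self (norm_nonneg _)) (by simp [mem_closedBall, dist_eq_norm])
  calc ‖u y - u x - (fderiv ℝ u x) (y - x)‖ ≤ (M * ‖y - x‖) * ‖y - x‖ := h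
    _ = M * (‖y - x‖ * ‖y - x‖) := by ring

end aux

theorem dual_vec {E : Type*} [NormedAddCommGroup E] [InnerProductSpace ℝ E] [CompleteSpace E]
    (f : E →L[ℝ] ℝ) (hf : 0 < ‖f‖) : ∃ e : E, ‖e‖ = 1 ∧ f e = ‖f‖ := by
  set v := (InnerProductSpace.toDual ℝ E).symm f with hv
  have hnv : ‖v‖ = ‖f‖ := (InnerProductSpace.toDual ℝ E).symm.norm_map f
  refine ⟨‖v‖⁻¹ • v, ?_, ?_⟩
  · rw [norm_smul, norm_inv, norm_norm, inv_mul_cancel₀ (by rw [hnv]; exact hf.ne')]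
  · have h1 : f (‖v‖⁻¹ • v) = ⟪v, ‖v‖⁻¹ • v⟫ := (InnerProductSpace.toDual_symm_apply).symm
    rw [h1, real_inner_smul_right, real_inner_self_eq_norm_mul_norm, hnv]
    field_simp

set_option maxHeartbeats 2000000 in
/-- Theorem 1.1, lower bound: there is `c = c(N) > 0` such that for all `1 ≤ p < ∞` and
`u ∈ C^∞_c(ℝ^N)`, `c^p ‖∇u‖_{L^p}^p ≤ sup_{λ>0} λ^p 𝓛^{2N}(E_λ)`. -/
theorem grad_Lp_le_weak_quasinorm (N : ℕ) (hN : 1 ≤ N) :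
    ∃ c : ℝ, 0 < c ∧ ∀ p : ℝ, 1 ≤ p → ∀ u : EuclideanSpace ℝ (Fin N) → ℝ,
      ContDiff ℝ (⊤ : ℕ∞) u → HasCompactSupport u →
      ENNReal.ofReal (c ^ p * ∫ x, ‖fderiv ℝ u x‖ ^ p)
        ≤ ⨆ (l : ℝ) (_ : 0 < l), ENNReal.ofReal (l ^ p) *
            volume {q : EuclideanSpace ℝ (Fin N) × EuclideanSpace ℝ (Fin N) | q.1 ≠ q.2 ∧
              |u q.1 - u q.2| ≥ l * ‖q.1 - q.2‖ ^ ((N : ℝ) / p + 1)} := by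
  classical
  set E := EuclideanSpace ℝ (Fin N) with hE
  have hN0 : (0:ℝ) < N := by exact_mod_cast hN
  set vB : ℝ≥0∞ := volume (ball (0 : E) 1) with hvB
  have hvB0 : 0 < vB := measure_ball_pos _ _ one_pos
  have hvBtop : vB ≠ ⊤ := measure_ball_lt_top.ne
  set β : ℝ := min 1 vB.toReal with hβ
  have hβ0 : 0 < β := lt_min one_pos (ENNReal.toReal_pos hvB0.ne' hvBtop)
  have hβ1 : β ≤ 1 := min_le_left _ _
  have hβvB : ENNReal.ofReal β ≤ vB := by
    calc ENNReal.ofReal β ≤ ENNReal.ofReal vB.toReal :=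
          ENNReal.ofReal_le_ofReal (min_le_right _ _)
      _ = vB := ENNReal.ofReal_toReal hvBtop
  set c : ℝ := β / (4 * 8 ^ N) with hc
  have hc0 : 0 < c := div_pos hβ0 (by positivity)
  refine ⟨c, hc0, ?_⟩
  intro p hp u hu hcs
  have hp0 : (0:ℝ) < p := lt_of_lt_of_le one_pos hp
  -- the key constant inequality
  have hcp : c ^ p ≤ β / (4 ^ p * 8 ^ N) := by
    have h1 : c ^ p = β ^ p / ((4 * 8 ^ N : ℝ)) ^ p := by
      rw [hc, Real.div_rpow hβ0.le (by positivity)]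
    have h2 : β ^ p ≤ β := by
      calc β ^ p ≤ β ^ (1:ℝ) := Real.rpow_le_rpow_of_exponent_ge hβ0 hβ1 hp
        _ = β := Real.rpow_one β
    have h3 : (4:ℝ) ^ p * 8 ^ N ≤ ((4 * 8 ^ N : ℝ)) ^ p := by
      rw [Real.mul_rpow (by norm_num) (by positivity)]
      gcongr
      calc ((8:ℝ) ^ N) = ((8:ℝ) ^ N) ^ (1:ℝ) := (Real.rpow_one _).symm
        _ ≤ ((8:ℝ) ^ N) ^ p := Real.rpow_le_rpow_of_exponent_le (one_le_pow₀ (by norm_num)) hp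
    rw [h1]
    exact div_le_div₀ hβ0.le h2 (by positivity) h3
  -- derivative facts
  have hg_cont : Continuous fun x : E => ‖fderiv ℝ u x‖ := (hu.continuous_fderiv (by simp)).norm
  have hsupp : HasCompactSupport (fderiv ℝ u) := HasCompactSupport.fderiv (𝕜 := ℝ) hcs
  obtain ⟨G, hG⟩ : ∃ G, ∀ x : E, ‖fderiv ℝ u x‖ ≤ G :=
    hsupp.exists_bound_of_continuous (hu.continuous_fderiv (by simp))
  obtain ⟨K, hK⟩ := ContDiff.lipschitzWith_of_hasCompactSupport hsupp
    (hu.fderiv_right (m := (⊤ : ℕ∞)) (by simp)) (by simp)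
  set M : ℝ := (K : ℝ) + 1 with hMdef
  have hM0 : 0 < M := by positivity
  have hLip : ∀ z w : E, ‖fderiv ℝ u z - fderiv ℝ u w‖ ≤ M * ‖z - w‖ := by
    intro z w
    have h1 := hK.dist_le_mul z w
    rw [dist_eq_norm, dist_eq_norm] at h1
    have h2 : (K : ℝ) * ‖z - w‖ ≤ M * ‖z - w‖ :=
      mul_le_mul_of_nonneg_right (by simp [hMdef]) (norm_nonneg _)
    exact h1.trans h2
  have htay := taylor_aux hu hM0.le hLip
  -- integrability
  have hgp_cont : Continuous fun x : E => ‖fderiv ℝ u x‖ ^ p :=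
    hg_cont.rpow_const fun x => Or.inr hp0.le
  have hgp_supp : HasCompactSupport fun x : E => ‖fderiv ℝ u x‖ ^ p := by
    have h0 : ‖(0 : E →L[ℝ] ℝ)‖ ^ p = 0 := by simp [Real.zero_rpow hp0.ne']
    exact hsupp.comp_left (g := fun v => ‖v‖ ^ p) h0
  have hint : Integrable (fun x : E => ‖fderiv ℝ u x‖ ^ p) :=
    hgp_cont.integrable_of_hasCompactSupport hgp_supp
  have hOR : ENNReal.ofReal (∫ x, ‖fderiv ℝ u x‖ ^ p) =
      ∫⁻ x, ENNReal.ofReal (‖fderiv ℝ u x‖ ^ p) :=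
    ofReal_integral_eq_lintegral_ofReal hint
      (Filter.Eventually.of_forall fun x => Real.rpow_nonneg (norm_nonneg _) _)
  set A : ℕ → Set E := fun n => {x | 1 / ((n : ℝ) + 1) ≤ ‖fderiv ℝ u x‖} with hA
  have hAmeas : ∀ n, MeasurableSet (A n) := fun n =>
    (isClosed_le continuous_const hg_cont).measurableSet
  -- monotone convergence
  have hMC : ∫⁻ x, ENNReal.ofReal (‖fderiv ℝ u x‖ ^ p) =
      ⨆ n, ∫⁻ x in A n, ENNReal.ofReal (‖fderiv ℝ u x‖ ^ p) := by
    have hfmeas : ∀ n : ℕ, Measurable ((A n).indicator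
        fun x => ENNReal.ofReal (‖fderiv ℝ u x‖ ^ p)) := fun n =>
      (hgp_cont.measurable.ennreal_ofReal).indicator (hAmeas n)
    have hmono : Monotone fun n : ℕ => (A n).indicator
        fun x => ENNReal.ofReal (‖fderiv ℝ u x‖ ^ p) := by
      intro m k hmk
      apply Set.indicator_le_indicator_of_subset
      · intro x hx
        simp only [hA, Set.mem_setOf_eq] at hx ⊢
        refine le_trans ?_ hx
        gcongr
      · intro x; exact zero_le
    have hptw : ∀ x, (⨆ n, (A n).indicator
        (fun x => ENNReal.ofReal (‖fderiv ℝ u x‖ ^ p)) x) =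
        ENNReal.ofReal (‖fderiv ℝ u x‖ ^ p) := by
      intro x
      rcases eq_or_lt_of_le (norm_nonneg (fderiv ℝ u x)) with h0 | h0
      · have hnot : ∀ n : ℕ, x ∉ A n := by
          intro n hxA
          rw [hA] at hxA
          simp only [Set.mem_setOf_eq, ← h0] at hxA
          have : (0:ℝ) < 1 / ((n : ℝ) + 1) := by positivity
          linarith
        simp [Set.indicator_of_notMem, hnot, ← h0, Real.zero_rpow hp0.ne']
      · apply le_antisymm
        · exact iSup_le fun n => (Set.indicator_le_self _ _) x
        · obtain ⟨m, hm⟩ := exists_nat_gt (1 / ‖fderiv ℝ u x‖)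
          have hxA : x ∈ A m := by
            rw [hA]
            simp only [Set.mem_setOf_eq]
            rw [div_le_iff₀ (by positivity)]
            have h2 : 1 < ‖fderiv ℝ u x‖ * m := by
              rw [div_lt_iff₀ h0] at hm
              linarith [hm]
            nlinarith [h0.le]
          calc ENNReal.ofReal (‖fderiv ℝ u x‖ ^ p)
              = (A m).indicator (fun x => ENNReal.ofReal (‖fderiv ℝ u x‖ ^ p)) x :=
                (Set.indicator_of_mem hxA (fun x => ENNReal.ofReal (‖fderiv ℝ u x‖ ^ p))).symm
            _ ≤ _ := le_iSup (fun n => (A n).indicator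
                (fun x => ENNReal.ofReal (‖fderiv ℝ u x‖ ^ p)) x) m
    calc ∫⁻ x, ENNReal.ofReal (‖fderiv ℝ u x‖ ^ p)
        = ∫⁻ x, ⨆ n, (A n).indicator (fun x => ENNReal.ofReal (‖fderiv ℝ u x‖ ^ p)) x :=
          lintegral_congr fun x => (hptw x).symm
      _ = ⨆ n, ∫⁻ x, (A n).indicator (fun x => ENNReal.ofReal (‖fderiv ℝ u x‖ ^ p)) x :=
          lintegral_iSup hfmeas hmono
      _ = ⨆ n, ∫⁻ x in A n, ENNReal.ofReal (‖fderiv ℝ u x‖ ^ p) :=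
          iSup_congr fun n => lintegral_indicator (hAmeas n) _
  -- main per-threshold estimate
  have main : ∀ n : ℕ,
      ENNReal.ofReal (c ^ p) * ∫⁻ x in A n, ENNReal.ofReal (‖fderiv ℝ u x‖ ^ p) ≤
      ⨆ (l : ℝ) (_ : 0 < l), ENNReal.ofReal (l ^ p) *
          volume {q : E × E | q.1 ≠ q.2 ∧
            |u q.1 - u q.2| ≥ l * ‖q.1 - q.2‖ ^ ((N : ℝ) / p + 1)} := by
    intro n
    set ε : ℝ := 1 / ((n : ℝ) + 1) with hεdef
    have hε0 : 0 < ε := by positivity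
    set lam : ℝ := max 1 ((G / 4) * ((4 * M / ε) ^ ((N : ℝ) / p))) with hlamdef
    have hlam1 : (1 : ℝ) ≤ lam := le_max_left _ _
    have hlam0 : (0 : ℝ) < lam := lt_of_lt_of_le one_pos hlam1
    set S : Set (E × E) := {q : E × E | q.1 ≠ q.2 ∧
        |u q.1 - u q.2| ≥ lam * ‖q.1 - q.2‖ ^ ((N : ℝ) / p + 1)} with hSdef
    have hSmeas : MeasurableSet S := by
      rw [hSdef]
      have h1 : IsOpen {q : E × E | q.1 ≠ q.2} := isOpen_ne_fun continuous_fst continuous_snd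
      have h2 : IsClosed {q : E × E |
          lam * ‖q.1 - q.2‖ ^ ((N : ℝ) / p + 1) ≤ |u q.1 - u q.2|} := by
        apply isClosed_le
        · exact continuous_const.mul (((continuous_fst.sub continuous_snd).norm).rpow_const
            fun q => Or.inr (by positivity))
        · exact ((hu.continuous.comp continuous_fst).sub (hu.continuous.comp continuous_snd)).abs
      exact h1.measurableSet.inter h2.measurableSet
    have hsec : ∀ x ∈ A n,
        ENNReal.ofReal (c ^ p) * ENNReal.ofReal (‖fderiv ℝ u x‖ ^ p) ≤
        ENNReal.ofReal (lam ^ p) * volume (Prod.mk x ⁻¹' S) := by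
      intro x hxA
      rw [hA] at hxA
      simp only [Set.mem_setOf_eq] at hxA
      have hxA' : ε ≤ ‖fderiv ℝ u x‖ := hxA
      have hgx : 0 < ‖fderiv ℝ u x‖ := lt_of_lt_of_le hε0 hxA'
      obtain ⟨e, he1, he2⟩ := dual_vec (fderiv ℝ u x) hgx
      set r : ℝ := (‖fderiv ℝ u x‖ / (4 * lam)) ^ (p / (N : ℝ)) with hrdef
      have hr0 : 0 < r := Real.rpow_pos_of_pos (by positivity) _
      have hiN : r ^ ((N : ℝ) / p) = ‖fderiv ℝ u x‖ / (4 * lam) := by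
        rw [hrdef, ← Real.rpow_mul (by positivity),
          show p / (N : ℝ) * ((N : ℝ) / p) = 1 by field_simp, Real.rpow_one]
      have hii : r ≤ ε / (4 * M) := by
        set t : ℝ := (ε / (4 * M)) ^ ((N : ℝ) / p) with htdef
        have ht0 : 0 < t := Real.rpow_pos_of_pos (by positivity) _
        have hprod : (4 * M / ε) ^ ((N : ℝ) / p) * t = 1 := by
          rw [htdef, ← Real.mul_rpow (by positivity) (by positivity),
            show 4 * M / ε * (ε / (4 * M)) = 1 by field_simp, Real.one_rpow]
        have hlam2 : G / 4 * (4 * M / ε) ^ ((N : ℝ) / p) ≤ lam := le_max_right _ _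
        have h4 : ‖fderiv ℝ u x‖ / (4 * lam) ≤ t := by
          rw [div_le_iff₀ (by positivity)]
          have h5 : G / 4 ≤ lam * t := by
            calc G / 4 = G / 4 * ((4 * M / ε) ^ ((N : ℝ) / p) * t) := by rw [hprod]; ring
              _ = G / 4 * (4 * M / ε) ^ ((N : ℝ) / p) * t := by ring
              _ ≤ lam * t := mul_le_mul_of_nonneg_right hlam2 ht0.le
          calc ‖fderiv ℝ u x‖ ≤ G := hG x
            _ ≤ 4 * (lam * t) := by linarith
            _ = t * (4 * lam) := by ring
        calc r ≤ t ^ (p / (N : ℝ)) := Real.rpow_le_rpow (by positivity) h4 (by positivity)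
          _ = ε / (4 * M) := by
              rw [htdef, ← Real.rpow_mul (by positivity),
                show (N : ℝ) / p * (p / (N : ℝ)) = 1 by field_simp, Real.rpow_one]
      set ctr : E := x - (3 * r / 4) • e with hctrdef
      have hball : ball ctr (r / 8) ⊆ Prod.mk x ⁻¹' S := by
        intro y hy
        have hdy : ‖x - y - (3 * r / 4) • e‖ < r / 8 := by
          have h1 : dist y ctr < r / 8 := hy
          rw [dist_eq_norm, hctrdef] at h1
          calc ‖x - y - (3 * r / 4) • e‖ = ‖y - (x - (3 * r / 4) • e)‖ := by
                rw [← norm_neg]; congr 1; abel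
            _ < r / 8 := h1
        have hnorme : ‖(3 * r / 4) • e‖ = 3 * r / 4 := by
          rw [norm_smul, he1, mul_one, Real.norm_eq_abs, abs_of_nonneg (by positivity)]
        have hub : ‖x - y‖ ≤ r := by
          calc ‖x - y‖ = ‖x - y - (3 * r / 4) • e + (3 * r / 4) • e‖ := by congr 1; abel
            _ ≤ ‖x - y - (3 * r / 4) • e‖ + ‖(3 * r / 4) • e‖ := norm_add_le _ _
            _ ≤ r / 8 + 3 * r / 4 := by rw [hnorme]; linarith [hdy.le]
            _ ≤ r := by linarith [hr0.le]
        have hlb : r / 2 ≤ ‖x - y‖ := by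
          have h2 : ‖(3 * r / 4) • e‖ - ‖(3 * r / 4) • e - (x - y)‖ ≤ ‖x - y‖ := by
            have h3 := norm_sub_norm_le ((3 * r / 4) • e) ((3 * r / 4) • e - (x - y))
            calc ‖(3 * r / 4) • e‖ - ‖(3 * r / 4) • e - (x - y)‖
                ≤ ‖(3 * r / 4) • e - ((3 * r / 4) • e - (x - y))‖ := h3
              _ = ‖x - y‖ := by congr 1; abel
          have h4 : ‖(3 * r / 4) • e - (x - y)‖ < r / 8 := by
            rw [norm_sub_rev]; exact hdy
          rw [hnorme] at h2
          linarith
        have hxy : x ≠ y := by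
          intro hxyeq
          rw [hxyeq, sub_self, norm_zero] at hlb
          linarith
        have hfh : 5 / 8 * (‖fderiv ℝ u x‖ * r) ≤ (fderiv ℝ u x) (x - y) := by
          have h6 : (fderiv ℝ u x) (x - y) =
              3 * r / 4 * ‖fderiv ℝ u x‖ + (fderiv ℝ u x) (x - y - (3 * r / 4) • e) := by
            have : (fderiv ℝ u x) (x - y) =
                (fderiv ℝ u x) ((3 * r / 4) • e) + (fderiv ℝ u x) (x - y - (3 * r / 4) • e) := by
              rw [← map_add]; congr 1; abel
            rw [this, ContinuousLinearMap.map_smul, he2, smul_eq_mul]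
          have h7 : |(fderiv ℝ u x) (x - y - (3 * r / 4) • e)| ≤ ‖fderiv ℝ u x‖ * (r / 8) := by
            calc |(fderiv ℝ u x) (x - y - (3 * r / 4) • e)|
                = ‖(fderiv ℝ u x) (x - y - (3 * r / 4) • e)‖ := (Real.norm_eq_abs _).symm
              _ ≤ ‖fderiv ℝ u x‖ * ‖x - y - (3 * r / 4) • e‖ :=
                  ContinuousLinearMap.le_opNorm _ _
              _ ≤ ‖fderiv ℝ u x‖ * (r / 8) :=
                  mul_le_mul_of_nonneg_left hdy.le (norm_nonneg _)
          have h8 := (abs_le.mp h7).1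
          rw [h6]
          linarith
        have htay2 : (fderiv ℝ u x) (x - y) - M * (‖x - y‖ * ‖x - y‖) ≤ u x - u y := by
          have h8 := htay x y
          have h9 : (fderiv ℝ u x) (y - x) = -(fderiv ℝ u x) (x - y) := by
            rw [← map_neg]; congr 1; abel
          rw [Real.norm_eq_abs, h9, norm_sub_rev y x] at h8
          have h10 := (abs_le.mp h8).2
          linarith
        have h12 : M * (‖x - y‖ * ‖x - y‖) ≤ ‖fderiv ℝ u x‖ / 4 * r := by
          have hMr : M * r ≤ ε / 4 := by
            have h13 := mul_le_mul_of_nonneg_left hii hM0.le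
            calc M * r ≤ M * (ε / (4 * M)) := h13
              _ = ε / 4 := by field_simp [hM0.ne']
          calc M * (‖x - y‖ * ‖x - y‖) ≤ M * (r * r) := by
                have h19 := mul_le_mul hub hub (norm_nonneg (x - y)) hr0.le
                exact mul_le_mul_of_nonneg_left h19 hM0.le
            _ = M * r * r := by ring
            _ ≤ ε / 4 * r := mul_le_mul_of_nonneg_right hMr hr0.le
            _ ≤ ‖fderiv ℝ u x‖ / 4 * r :=
                mul_le_mul_of_nonneg_right (by linarith) hr0.le
        have h13 : lam * ‖x - y‖ ^ ((N : ℝ) / p + 1) ≤ ‖fderiv ℝ u x‖ / 4 * r := by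
          have hxy0 : (0 : ℝ) < ‖x - y‖ := lt_of_lt_of_le (by positivity) hlb
          have h14 : ‖x - y‖ ^ ((N : ℝ) / p + 1) = ‖x - y‖ ^ ((N : ℝ) / p) * ‖x - y‖ := by
            rw [Real.rpow_add hxy0, Real.rpow_one]
          have h15 : ‖x - y‖ ^ ((N : ℝ) / p) ≤ r ^ ((N : ℝ) / p) :=
            Real.rpow_le_rpow (norm_nonneg _) hub (by positivity)
          calc lam * ‖x - y‖ ^ ((N : ℝ) / p + 1)
              = lam * (‖x - y‖ ^ ((N : ℝ) / p) * ‖x - y‖) := by rw [h14]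
            _ ≤ lam * (‖fderiv ℝ u x‖ / (4 * lam) * r) := by
                have h16 : ‖x - y‖ ^ ((N : ℝ) / p) * ‖x - y‖ ≤
                    ‖fderiv ℝ u x‖ / (4 * lam) * r :=
                  mul_le_mul (h15.trans_eq hiN) hub (norm_nonneg _) (by positivity)
                exact mul_le_mul_of_nonneg_left h16 hlam0.le
            _ = ‖fderiv ℝ u x‖ / 4 * r := by field_simp [hlam0.ne']
        have hmem : lam * ‖x - y‖ ^ ((N : ℝ) / p + 1) ≤ |u x - u y| := by
          have h17 : lam * ‖x - y‖ ^ ((N : ℝ) / p + 1) ≤ u x - u y := by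
            have h18 : (0 : ℝ) ≤ ‖fderiv ℝ u x‖ * r := mul_nonneg hgx.le hr0.le
            have h20 : ‖fderiv ℝ u x‖ / 4 * r ≤ 3 / 8 * (‖fderiv ℝ u x‖ * r) := by linarith
            have h22 : 5 / 8 * (‖fderiv ℝ u x‖ * r) - ‖fderiv ℝ u x‖ / 4 * r ≤ u x - u y :=
              le_trans (sub_le_sub hfh h12) htay2
            have h21 : 3 / 8 * (‖fderiv ℝ u x‖ * r) ≤ u x - u y := by linarith
            exact h13.trans (h20.trans h21)
          exact le_trans h17 (le_abs_self _)
        exact ⟨hxy, hmem⟩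
      haveI : Nontrivial E := by
        have : 0 < Module.finrank ℝ E := by
          rw [show Module.finrank ℝ E = N from finrank_euclideanSpace_fin]; omega
        exact Module.nontrivial_of_finrank_pos this
      have hvol : ENNReal.ofReal ((r / 8) ^ N) * vB ≤ volume (Prod.mk x ⁻¹' S) := by
        have hb := Measure.addHaar_ball (μ := (volume : Measure E)) ctr
          (by positivity : (0 : ℝ) ≤ r / 8)
        rw [show Module.finrank ℝ E = N from finrank_euclideanSpace_fin] at hb
        calc ENNReal.ofReal ((r / 8) ^ N) * vB = volume (ball ctr (r / 8)) := by
              rw [hb, hvB]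
          _ ≤ volume (Prod.mk x ⁻¹' S) := measure_mono hball
      have hkey : lam ^ p * (r / 8) ^ N = ‖fderiv ℝ u x‖ ^ p / (4 ^ p * 8 ^ N) := by
        have hrN : (r / 8) ^ N = (‖fderiv ℝ u x‖ / (4 * lam)) ^ p / 8 ^ N := by
          rw [div_pow]
          congr 1
          calc r ^ N = r ^ ((N : ℕ) : ℝ) := (Real.rpow_natCast r N).symm
            _ = (‖fderiv ℝ u x‖ / (4 * lam)) ^ (p / (N : ℝ) * (N : ℝ)) := by
                rw [hrdef, ← Real.rpow_mul (by positivity)]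
            _ = (‖fderiv ℝ u x‖ / (4 * lam)) ^ p := by
                rw [show p / (N : ℝ) * (N : ℝ) = p by field_simp]
        rw [hrN]
        calc lam ^ p * ((‖fderiv ℝ u x‖ / (4 * lam)) ^ p / 8 ^ N)
            = lam ^ p * (‖fderiv ℝ u x‖ / (4 * lam)) ^ p / 8 ^ N := by ring
          _ = (lam * (‖fderiv ℝ u x‖ / (4 * lam))) ^ p / 8 ^ N := by
              rw [← Real.mul_rpow hlam0.le (by positivity)]
          _ = (‖fderiv ℝ u x‖ / 4) ^ p / 8 ^ N := by
              rw [show lam * (‖fderiv ℝ u x‖ / (4 * lam)) = ‖fderiv ℝ u x‖ / 4 by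
                field_simp]
          _ = ‖fderiv ℝ u x‖ ^ p / 4 ^ p / 8 ^ N := by
              rw [Real.div_rpow (norm_nonneg _) (by norm_num)]
          _ = ‖fderiv ℝ u x‖ ^ p / (4 ^ p * 8 ^ N) := by rw [div_div]
      have hreal : c ^ p * ‖fderiv ℝ u x‖ ^ p ≤ lam ^ p * (r / 8) ^ N * β := by
        rw [hkey]
        calc c ^ p * ‖fderiv ℝ u x‖ ^ p ≤ β / (4 ^ p * 8 ^ N) * ‖fderiv ℝ u x‖ ^ p :=
              mul_le_mul_of_nonneg_right hcp (Real.rpow_nonneg (norm_nonneg _) _)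
          _ = ‖fderiv ℝ u x‖ ^ p / (4 ^ p * 8 ^ N) * β := by ring
      calc ENNReal.ofReal (c ^ p) * ENNReal.ofReal (‖fderiv ℝ u x‖ ^ p)
          = ENNReal.ofReal (c ^ p * ‖fderiv ℝ u x‖ ^ p) :=
            (ENNReal.ofReal_mul (by positivity)).symm
        _ ≤ ENNReal.ofReal (lam ^ p * (r / 8) ^ N * β) := ENNReal.ofReal_le_ofReal hreal
        _ = ENNReal.ofReal (lam ^ p * (r / 8) ^ N) * ENNReal.ofReal β :=
            ENNReal.ofReal_mul (by positivity)
        _ ≤ ENNReal.ofReal (lam ^ p * (r / 8) ^ N) * vB := mul_le_mul_right hβvB _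
        _ = ENNReal.ofReal (lam ^ p) * (ENNReal.ofReal ((r / 8) ^ N) * vB) := by
            rw [ENNReal.ofReal_mul (by positivity), mul_assoc]
        _ ≤ ENNReal.ofReal (lam ^ p) * volume (Prod.mk x ⁻¹' S) := mul_le_mul_right hvol _
    calc ENNReal.ofReal (c ^ p) * ∫⁻ x in A n, ENNReal.ofReal (‖fderiv ℝ u x‖ ^ p)
        = ∫⁻ x in A n, ENNReal.ofReal (c ^ p) * ENNReal.ofReal (‖fderiv ℝ u x‖ ^ p) :=
          (lintegral_const_mul' _ _ ENNReal.ofReal_ne_top).symm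
      _ ≤ ∫⁻ x in A n, ENNReal.ofReal (lam ^ p) * volume (Prod.mk x ⁻¹' S) :=
          setLIntegral_mono ((measurable_measure_prodMk_left hSmeas).const_mul _) hsec
      _ = ENNReal.ofReal (lam ^ p) * ∫⁻ x in A n, volume (Prod.mk x ⁻¹' S) :=
          lintegral_const_mul' _ _ ENNReal.ofReal_ne_top
      _ ≤ ENNReal.ofReal (lam ^ p) * ∫⁻ x, volume (Prod.mk x ⁻¹' S) := by
          gcongr
          exact Measure.restrict_le_self
      _ = ENNReal.ofReal (lam ^ p) * volume S := by
          rw [Measure.volume_eq_prod E E, Measure.prod_apply hSmeas]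
      _ ≤ _ := le_iSup₂ (f := fun (l : ℝ) (_ : 0 < l) => ENNReal.ofReal (l ^ p) *
            volume {q : E × E | q.1 ≠ q.2 ∧
              |u q.1 - u q.2| ≥ l * ‖q.1 - q.2‖ ^ ((N : ℝ) / p + 1)}) lam hlam0
  rw [ENNReal.ofReal_mul (by positivity : (0:ℝ) ≤ c ^ p), hOR, hMC, ENNReal.mul_iSup]
  exact iSup_le main
end

section
/- Let N ≥ 1, 1 ≤ p < ∞, u ∈ C^∞_c(ℝ^N), and E_λ as above. Then limsup_{λ→∞} λ^p 𝓛^{2N}(E_λ) ≤ (k(p,N)/N) ∫_{ℝ^N} |∇u(x)|^p dx. -/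
open MeasureTheory

section Aux

open Set Function Metric intervalIntegral Filter
open scoped ENNReal NNReal Pointwise RealInnerProductSpace

lemma vip_Iic (n : ℕ) {R : ℝ} (hR : 0 ≤ R) :
    Measure.volumeIoiPow n {r : Set.Ioi (0:ℝ) | r.1 ≤ R} = ENNReal.ofReal (R ^ (n + 1) / (n + 1)) := by
  have hmeas : MeasurableSet {r : Set.Ioi (0:ℝ) | r.1 ≤ R} :=
    measurable_subtype_coe measurableSet_Iic
  have himg : (Subtype.val '' {r : Set.Ioi (0:ℝ) | r.1 ≤ R}) = Ioc 0 R := by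
    ext x
    simp only [mem_image, mem_setOf_eq, mem_Ioc, Subtype.exists, mem_Ioi, exists_and_left,
      exists_prop, exists_eq_right]
    constructor
    · rintro ⟨w, hwR, hw0, rfl⟩; exact ⟨hw0, hwR⟩
    · rintro ⟨h0, hR2⟩; exact ⟨x, hR2, h0, rfl⟩
  rw [Measure.volumeIoiPow, withDensity_apply _ hmeas,
    setLIntegral_subtype measurableSet_Ioi _ fun a : ℝ ↦ .ofReal (a ^ n), himg,
    ← ofReal_integral_eq_lintegral_ofReal (intervalIntegrable_pow _).1, ← integral_of_le hR]
  · simp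
  · filter_upwards [ae_restrict_mem measurableSet_Ioc] with y hy
    exact pow_nonneg hy.1.le _

variable {E : Type*} [NormedAddCommGroup E] [NormedSpace ℝ E] [MeasurableSpace E] [BorelSpace E]
  [FiniteDimensional ℝ E]

lemma measure_polar (μ : Measure E) [μ.IsAddHaarMeasure] (P : E → Prop)
    (hP : MeasurableSet {z : E | P z}) :
    μ {z : E | z ≠ 0 ∧ P z} =
      ∫⁻ ω : sphere (0:E) 1,
        Measure.volumeIoiPow (Module.finrank ℝ E - 1) {r : Set.Ioi (0:ℝ) | P (r.1 • ω.1)}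
        ∂μ.toSphere := by
  have hT : MeasurableSet {q : sphere (0:E) 1 × Set.Ioi (0:ℝ) | P (q.2.1 • q.1.1)} := by
    have : Measurable fun q : sphere (0:E) 1 × Set.Ioi (0:ℝ) => q.2.1 • q.1.1 :=
      (continuous_subtype_val.comp continuous_snd).smul
        (continuous_subtype_val.comp continuous_fst) |>.measurable
    exact this hP
  have hpre : (Subtype.val : ({0}ᶜ : Set E) → E) ⁻¹' {z : E | z ≠ 0 ∧ P z}
      = (homeomorphUnitSphereProd E) ⁻¹' {q : sphere (0:E) 1 × Set.Ioi (0:ℝ) | P (q.2.1 • q.1.1)} := by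
    ext z
    have hz : z.1 ≠ 0 := z.2
    simp only [mem_preimage, mem_setOf_eq, homeomorphUnitSphereProd_apply_snd_coe,
      homeomorphUnitSphereProd_apply_fst_coe]
    rw [smul_inv_smul₀ (norm_ne_zero_iff.2 hz)]
    simp [hz]
  have hS : {z : E | z ≠ 0 ∧ P z} ⊆ ({0}ᶜ : Set E) := fun z hz => hz.1
  calc μ {z : E | z ≠ 0 ∧ P z}
      = (μ.comap (Subtype.val : ({0}ᶜ : Set E) → E))
          ((Subtype.val : ({0}ᶜ : Set E) → E) ⁻¹' {z : E | z ≠ 0 ∧ P z}) := by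
        rw [comap_subtype_coe_apply (measurableSet_singleton (0:E)).compl,
          Subtype.image_preimage_coe]
        congr 1
        exact (inter_eq_self_of_subset_right hS).symm
    _ = (μ.toSphere.prod (Measure.volumeIoiPow (Module.finrank ℝ E - 1)))
          {q : sphere (0:E) 1 × Set.Ioi (0:ℝ) | P (q.2.1 • q.1.1)} := by
        rw [hpre]
        exact (Measure.measurePreserving_homeomorphUnitSphereProd μ).measure_preimage
          hT.nullMeasurableSet
    _ = _ := by
        rw [Measure.prod_apply hT]
        rfl

end Aux

section Aux2

open Set Function Metric intervalIntegral Filter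
open scoped ENNReal NNReal Pointwise RealInnerProductSpace

variable {E : Type*} [NormedAddCommGroup E] [InnerProductSpace ℝ E] [MeasurableSpace E]
  [BorelSpace E] [FiniteDimensional ℝ E]

lemma toSphere_map_isometry (R : E ≃ₗᵢ[ℝ] E) :
    Measure.map (fun ω : sphere (0:E) 1 =>
        (⟨R ω.1, by simp [mem_sphere_zero_iff_norm, R.norm_map,
          mem_sphere_zero_iff_norm.1 ω.2]⟩ : sphere (0:E) 1))
      (volume : Measure E).toSphere = (volume : Measure E).toSphere := by
  set f : sphere (0:E) 1 → sphere (0:E) 1 := fun ω =>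
    ⟨R ω.1, by simp [mem_sphere_zero_iff_norm, R.norm_map, mem_sphere_zero_iff_norm.1 ω.2]⟩
  have hfc : Continuous f := Continuous.subtype_mk (R.continuous.comp continuous_subtype_val) _
  ext s hs
  rw [Measure.map_apply hfc.measurable hs, Measure.toSphere_apply' _ (hfc.measurable hs),
    Measure.toSphere_apply' _ hs]
  congr 1
  have himg : (Subtype.val '' (f ⁻¹' s)) = R ⁻¹' (Subtype.val '' s) := by
    ext x
    constructor
    · rintro ⟨ω, hω, rfl⟩
      exact ⟨f ω, hω, rfl⟩
    · rintro ⟨ω, hω, h⟩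
      have hx : x ∈ sphere (0:E) 1 := by
        rw [mem_sphere_zero_iff_norm, ← R.norm_map x, ← h]
        exact mem_sphere_zero_iff_norm.1 ω.2
      refine ⟨⟨x, hx⟩, ?_, rfl⟩
      show f ⟨x, hx⟩ ∈ s
      have : f ⟨x, hx⟩ = ω := Subtype.ext h.symm
      rwa [this]
  rw [himg]
  have hsmul : (Ioo (0:ℝ) 1 • (R ⁻¹' (Subtype.val '' s))) = R ⁻¹' (Ioo (0:ℝ) 1 • (Subtype.val '' s)) := by
    ext z
    constructor
    · rintro ⟨c, hc, a, ha, rfl⟩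
      exact ⟨c, hc, R a, ha, by simp⟩
    · rintro ⟨c, hc, a, ha, hz⟩
      refine ⟨c, hc, R.symm a, by simpa using ha, ?_⟩
      have : z = R.symm (c • a) := by
        apply R.injective; simpa using hz.symm
      simp [this]
  rw [hsmul]
  have hmp : MeasurePreserving (⇑R.toMeasurableEquiv) (volume : Measure E) volume := by
    rw [LinearIsometryEquiv.coe_toMeasurableEquiv]; exact R.measurePreserving
  exact hmp.measure_preimage_equiv _

lemma lintegral_inner_rpow_sphere {p : ℝ} (hp : 1 ≤ p) (e v : E) (he : ‖e‖ = 1) :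
    ∫⁻ ω : sphere (0:E) 1, ENNReal.ofReal (|⟪v, ω.1⟫| ^ p) ∂(volume : Measure E).toSphere
      = ENNReal.ofReal (‖v‖ ^ p) *
        ∫⁻ ω : sphere (0:E) 1, ENNReal.ofReal (|⟪e, ω.1⟫| ^ p) ∂(volume : Measure E).toSphere := by
  have hp0 : p ≠ 0 := by positivity
  rcases eq_or_ne v 0 with rfl | hv
  · simp [Real.zero_rpow hp0]
  · have hnv : ‖v‖ ≠ 0 := norm_ne_zero_iff.2 hv
    set w : E := ‖v‖⁻¹ • v with hw
    have hwn : ‖w‖ = 1 := by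
      rw [hw, norm_smul, norm_inv, norm_norm, inv_mul_cancel₀ hnv]
    have h1 : ∀ ω : sphere (0:E) 1, ENNReal.ofReal (|⟪v, ω.1⟫| ^ p)
        = ENNReal.ofReal (‖v‖ ^ p) * ENNReal.ofReal (|⟪w, ω.1⟫| ^ p) := by
      intro ω
      rw [← ENNReal.ofReal_mul (by positivity)]
      congr 1
      have : ⟪v, ω.1⟫ = ‖v‖ * ⟪w, ω.1⟫ := by
        rw [hw, real_inner_smul_left]
        field_simp
      rw [this, abs_mul, abs_of_nonneg (norm_nonneg v),
        Real.mul_rpow (norm_nonneg v) (abs_nonneg _)]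
    simp only [h1]
    rw [lintegral_const_mul' _ _ ENNReal.ofReal_ne_top]
    congr 1
    obtain ⟨R, hR⟩ : ∃ R : E ≃ₗᵢ[ℝ] E, R w = e :=
      ⟨Submodule.reflection (ℝ ∙ (w - e))ᗮ, Submodule.reflection_sub (by rw [hwn, he])⟩
    set f : sphere (0:E) 1 → sphere (0:E) 1 := fun ω =>
      ⟨R ω.1, by simp [mem_sphere_zero_iff_norm, R.norm_map, mem_sphere_zero_iff_norm.1 ω.2]⟩
    have hfc : Continuous f := Continuous.subtype_mk (R.continuous.comp continuous_subtype_val) _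
    have hkey : ∀ ω : sphere (0:E) 1, ⟪w, ω.1⟫ = ⟪e, (f ω).1⟫ := by
      intro ω
      show ⟪w, ω.1⟫ = ⟪e, R ω.1⟫
      rw [← hR]
      exact (R.inner_map_map w ω.1).symm
    calc ∫⁻ ω : sphere (0:E) 1, ENNReal.ofReal (|⟪w, ω.1⟫| ^ p) ∂(volume : Measure E).toSphere
        = ∫⁻ ω : sphere (0:E) 1, ENNReal.ofReal (|⟪e, (f ω).1⟫| ^ p)
            ∂(volume : Measure E).toSphere := by
          congr 1; ext ω; rw [hkey]
      _ = ∫⁻ ω : sphere (0:E) 1, ENNReal.ofReal (|⟪e, ω.1⟫| ^ p)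
            ∂(Measure.map f (volume : Measure E).toSphere) := by
          rw [lintegral_map ?_ hfc.measurable]
          · exact ENNReal.measurable_ofReal.comp <|
              (((continuous_const.inner continuous_subtype_val).abs.rpow_const
                (fun x => Or.inr (by positivity))).measurable)
      _ = _ := by rw [toSphere_map_isometry R]

lemma rpow_le_base {a b q : ℝ} (ha : 0 ≤ a) (hb : 0 ≤ b) (hq : 0 < q) (h : a ^ q ≤ b ^ q) :
    a ≤ b := by
  have h2 := Real.rpow_le_rpow (Real.rpow_nonneg ha q) h (by positivity : (0:ℝ) ≤ q⁻¹)
  rwa [← Real.rpow_mul ha, ← Real.rpow_mul hb, mul_inv_cancel₀ hq.ne', Real.rpow_one,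
    Real.rpow_one] at h2

lemma measure_E_eq (N : ℕ) (u : EuclideanSpace ℝ (Fin N) → ℝ)
    (hu : Continuous u) (l α : ℝ) (hα : 0 < α) :
    volume {q : EuclideanSpace ℝ (Fin N) × EuclideanSpace ℝ (Fin N) | q.1 ≠ q.2 ∧
        |u q.1 - u q.2| ≥ l * ‖q.1 - q.2‖ ^ α} =
    ∫⁻ x, ∫⁻ ω : sphere (0 : EuclideanSpace ℝ (Fin N)) 1,
        Measure.volumeIoiPow (N - 1)
          {r : Set.Ioi (0:ℝ) | |u x - u (x + r.1 • ω.1)| ≥ l * ‖r.1 • ω.1‖ ^ α}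
        ∂(volume : Measure (EuclideanSpace ℝ (Fin N))).toSphere := by
  have hEm : MeasurableSet {q : EuclideanSpace ℝ (Fin N) × EuclideanSpace ℝ (Fin N) | q.1 ≠ q.2 ∧
      |u q.1 - u q.2| ≥ l * ‖q.1 - q.2‖ ^ α} := by
    have h1 : MeasurableSet {q : EuclideanSpace ℝ (Fin N) × EuclideanSpace ℝ (Fin N) |
        q.1 ≠ q.2} := (isClosed_eq continuous_fst continuous_snd).isOpen_compl.measurableSet
    have h2 : MeasurableSet {q : EuclideanSpace ℝ (Fin N) × EuclideanSpace ℝ (Fin N) |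
        l * ‖q.1 - q.2‖ ^ α ≤ |u q.1 - u q.2|} := by
      refine (isClosed_le ?_ ?_).measurableSet
      · exact continuous_const.mul ((continuous_fst.sub continuous_snd).norm.rpow_const
          (fun q => Or.inr hα.le))
      · exact ((hu.comp continuous_fst).sub (hu.comp continuous_snd)).abs
    exact h1.inter h2
  rw [Measure.volume_eq_prod, Measure.prod_apply hEm]
  refine lintegral_congr fun x => ?_
  have hPm : MeasurableSet {z : EuclideanSpace ℝ (Fin N) |
      |u x - u (x + z)| ≥ l * ‖z‖ ^ α} := by
    refine (isClosed_le ?_ ?_).measurableSet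
    · exact continuous_const.mul (continuous_norm.rpow_const (fun q => Or.inr hα.le))
    · exact (continuous_const.sub (hu.comp (continuous_const.add continuous_id))).abs
  have hpre : ((fun z : EuclideanSpace ℝ (Fin N) => x + z) ⁻¹'
        (Prod.mk x ⁻¹' {q : EuclideanSpace ℝ (Fin N) × EuclideanSpace ℝ (Fin N) | q.1 ≠ q.2 ∧
          |u q.1 - u q.2| ≥ l * ‖q.1 - q.2‖ ^ α}))
      = {z : EuclideanSpace ℝ (Fin N) | z ≠ 0 ∧ |u x - u (x + z)| ≥ l * ‖z‖ ^ α} := by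
    ext z
    simp only [Set.mem_preimage, Set.mem_setOf_eq, ne_eq, left_eq_add,
      sub_add_cancel_left, norm_neg]
  calc volume (Prod.mk x ⁻¹' {q : EuclideanSpace ℝ (Fin N) × EuclideanSpace ℝ (Fin N) |
          q.1 ≠ q.2 ∧ |u q.1 - u q.2| ≥ l * ‖q.1 - q.2‖ ^ α})
      = volume {z : EuclideanSpace ℝ (Fin N) | z ≠ 0 ∧ |u x - u (x + z)| ≥ l * ‖z‖ ^ α} := by
        rw [← hpre, measure_preimage_add]
    _ = _ := by
        rw [measure_polar volume _ hPm, finrank_euclideanSpace_fin]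

end Aux2

open scoped ENNReal RealInnerProductSpace

set_option maxHeartbeats 2000000 in
/-- `limsup_{λ→∞} λ^p 𝓛^{2N}(E_λ) ≤ (k(p,N)/N) ∫ |∇u|^p`. -/
theorem limsup_lambda_pow_measure_le (N : ℕ) (hN : 1 ≤ N) (p : ℝ) (hp : 1 ≤ p)
    (u : EuclideanSpace ℝ (Fin N) → ℝ) (hu : ContDiff ℝ (⊤ : ℕ∞) u) (huc : HasCompactSupport u)
    (e : EuclideanSpace ℝ (Fin N)) (he : ‖e‖ = 1) :
    Filter.limsup
      (fun l : ℝ => l ^ p *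
        (volume {q : EuclideanSpace ℝ (Fin N) × EuclideanSpace ℝ (Fin N) | q.1 ≠ q.2 ∧
          |u q.1 - u q.2| ≥ l * ‖q.1 - q.2‖ ^ ((N : ℝ) / p + 1)}).toReal)
      Filter.atTop
      ≤ ((∫ ω : Metric.sphere (0 : EuclideanSpace ℝ (Fin N)) 1,
          |(inner ℝ e (ω : EuclideanSpace ℝ (Fin N)) : ℝ)| ^ p
            ∂((volume : Measure (EuclideanSpace ℝ (Fin N))).toSphere)) / N) *
        ∫ x, ‖fderiv ℝ u x‖ ^ p := by
  classical
  have hp0 : (0:ℝ) < p := lt_of_lt_of_le one_pos hp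
  have hN0 : (0:ℝ) < N := by exact_mod_cast hN
  have hNne : (N:ℝ) ≠ 0 := hN0.ne'
  have hq : 0 < (N:ℝ) / p := by positivity
  have hα : (0:ℝ) < (N:ℝ) / p + 1 := by positivity
  have hucont : Continuous u := hu.continuous
  have hud : Differentiable ℝ u := hu.differentiable (by simp)
  have hf'c : Continuous (fderiv ℝ u) := hu.continuous_fderiv (by simp)
  have hf'supp : HasCompactSupport (fderiv ℝ u) := huc.fderiv (𝕜 := ℝ)
  obtain ⟨C₀, hC₀⟩ := hf'supp.exists_bound_of_continuous hf'c
  set C : ℝ := max C₀ 0 + 1 with hCdef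
  have hCpos : 0 < C := by positivity
  have hC : ∀ x, ‖fderiv ℝ u x‖ ≤ C := fun x =>
    (hC₀ x).trans (by simp [hCdef]; linarith [le_max_left C₀ (0:ℝ)])
  have hLip : ∀ x y : EuclideanSpace ℝ (Fin N), |u x - u y| ≤ C * ‖x - y‖ := by
    intro x y
    have := Convex.norm_image_sub_le_of_norm_fderiv_le (f := u)
      (fun z _ => hud z) (fun z _ => hC z) convex_univ (Set.mem_univ y) (Set.mem_univ x)
    simpa [Real.norm_eq_abs] using this
  set v : EuclideanSpace ℝ (Fin N) → EuclideanSpace ℝ (Fin N) :=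
    fun x => (InnerProductSpace.toDual ℝ _).symm (fderiv ℝ u x) with hvdef
  have hvc : Continuous v := (InnerProductSpace.toDual ℝ _).symm.continuous.comp hf'c
  have hvinner : ∀ x w, ⟪v x, w⟫ = fderiv ℝ u x w := fun x w =>
    InnerProductSpace.toDual_symm_apply
  have hvnorm : ∀ x, ‖v x‖ = ‖fderiv ℝ u x‖ := fun x =>
    LinearIsometryEquiv.norm_map _ _
  have hvC : ∀ x (ω : Metric.sphere (0 : EuclideanSpace ℝ (Fin N)) 1), |⟪v x, ω.1⟫| ≤ C := by
    intro x ω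
    have h1 : |⟪v x, ω.1⟫| ≤ ‖v x‖ * ‖ω.1‖ := abs_real_inner_le_norm _ _
    rw [mem_sphere_zero_iff_norm.1 ω.2, mul_one, hvnorm] at h1
    exact h1.trans (hC x)
  have htay : ∀ ε : ℝ, 0 < ε → ∃ δ : ℝ, 0 < δ ∧ ∀ x z : EuclideanSpace ℝ (Fin N), ‖z‖ ≤ δ →
      |u (x + z) - u x - fderiv ℝ u x z| ≤ ε * ‖z‖ := by
    intro ε hε
    have huc2 : UniformContinuous (fderiv ℝ u) :=
      hf'c.uniformContinuous_of_tendsto_cocompact hf'supp.is_zero_at_infty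
    obtain ⟨δ₀, hδ₀, hδ⟩ := Metric.uniformContinuous_iff.1 huc2 ε hε
    refine ⟨δ₀ / 2, by positivity, fun x z hz => ?_⟩
    have key : ∀ a ∈ Metric.closedBall x (δ₀ / 2), ‖fderiv ℝ u a - fderiv ℝ u x‖ ≤ ε := by
      intro a ha
      have h2 : dist a x < δ₀ := lt_of_le_of_lt (Metric.mem_closedBall.1 ha) (by linarith)
      exact le_of_lt (by simpa [dist_eq_norm] using hδ h2)
    have h3 := Convex.norm_image_sub_le_of_norm_fderiv_le' (f := u) (φ := fderiv ℝ u x)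
      (fun a _ => hud a) key (convex_closedBall x (δ₀ / 2))
      (Metric.mem_closedBall_self (by positivity))
      (y := x + z) (by simpa [Metric.mem_closedBall, dist_eq_norm] using hz)
    simpa [Real.norm_eq_abs, add_sub_cancel_left] using h3
  set K₁ : Set (EuclideanSpace ℝ (Fin N)) := Metric.cthickening 1 (tsupport u) with hK₁def
  have hK₁c : IsCompact K₁ := IsCompact.cthickening huc
  have hK₁m : MeasurableSet K₁ := Metric.isClosed_cthickening.measurableSet
  set σ := (volume : Measure (EuclideanSpace ℝ (Fin N))).toSphere with hσdef
  set κ : ℝ≥0∞ := ∫⁻ ω : Metric.sphere (0 : EuclideanSpace ℝ (Fin N)) 1,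
    ENNReal.ofReal (|⟪e, ω.1⟫| ^ p) ∂σ with hκdef
  set Φ : ℝ → ℝ≥0∞ := fun ε => ∫⁻ x in K₁, ∫⁻ ω : Metric.sphere (0 : EuclideanSpace ℝ (Fin N)) 1,
    ENNReal.ofReal ((|⟪v x, ω.1⟫| + ε) ^ p / N) ∂σ with hΦdef
  have hΦ_ne_top : ∀ ε : ℝ, 0 ≤ ε → ε ≤ 1 → Φ ε ≠ ⊤ := by
    intro ε hε0 hε1
    have hb : Φ ε ≤ ENNReal.ofReal ((C + 1) ^ p / N) * σ Set.univ * volume K₁ := by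
      calc Φ ε ≤ ∫⁻ _x in K₁, ∫⁻ _ω : Metric.sphere (0 : EuclideanSpace ℝ (Fin N)) 1,
          ENNReal.ofReal ((C + 1) ^ p / N) ∂σ := by
            refine lintegral_mono fun x => lintegral_mono fun ω => ENNReal.ofReal_le_ofReal ?_
            have h1 : (|⟪v x, ω.1⟫| + ε) ^ p ≤ (C + 1) ^ p :=
              Real.rpow_le_rpow (add_nonneg (abs_nonneg _) hε0)
                (add_le_add (hvC x ω) hε1) hp0.le
            exact div_le_div_of_nonneg_right h1 hN0.le
        _ = ENNReal.ofReal ((C + 1) ^ p / N) * σ Set.univ * volume K₁ := by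
            rw [lintegral_const, lintegral_const, Measure.restrict_apply_univ]
    intro htop
    rw [htop] at hb
    exact (ENNReal.mul_lt_top (ENNReal.mul_lt_top ENNReal.ofReal_lt_top
      (measure_lt_top σ _)) hK₁c.measure_lt_top).ne (top_le_iff.1 hb)
  have hmain : ∀ ε : ℝ, 0 < ε → ε ≤ 1 → ∀ᶠ l in Filter.atTop,
      l ^ p * (volume {q : EuclideanSpace ℝ (Fin N) × EuclideanSpace ℝ (Fin N) | q.1 ≠ q.2 ∧
        |u q.1 - u q.2| ≥ l * ‖q.1 - q.2‖ ^ ((N : ℝ) / p + 1)}).toReal ≤ (Φ ε).toReal := by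
    intro ε hε hε1
    obtain ⟨δ, hδ0, hδ⟩ := htay ε hε
    set δ₁ : ℝ := min δ 1 with hδ₁def
    have hδ₁0 : 0 < δ₁ := lt_min hδ0 one_pos
    have hδ₁δ : δ₁ ≤ δ := min_le_left _ _
    have hδ₁1 : δ₁ ≤ 1 := min_le_right _ _
    filter_upwards [Filter.eventually_ge_atTop (max 1 (C / δ₁ ^ ((N:ℝ)/p)))] with l hl
    have hl1 : (1:ℝ) ≤ l := le_trans (le_max_left _ _) hl
    have hl0 : (0:ℝ) < l := lt_of_lt_of_le one_pos hl1
    have hlC : C / δ₁ ^ ((N:ℝ)/p) ≤ l := le_trans (le_max_right _ _) hl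
    have hlp0 : (0:ℝ) < l ^ p := Real.rpow_pos_of_pos hl0 p
    have hnorm_smul : ∀ (s : ℝ), 0 < s →
        ∀ ω : Metric.sphere (0 : EuclideanSpace ℝ (Fin N)) 1, ‖s • ω.1‖ = s := by
      intro s hs ω
      rw [norm_smul, mem_sphere_zero_iff_norm.1 ω.2, mul_one, Real.norm_eq_abs, abs_of_pos hs]
    have hsmall : ∀ (x : EuclideanSpace ℝ (Fin N))
        (ω : Metric.sphere (0 : EuclideanSpace ℝ (Fin N)) 1) (r : Set.Ioi (0:ℝ)),
        |u x - u (x + r.1 • ω.1)| ≥ l * ‖r.1 • ω.1‖ ^ ((N:ℝ)/p + 1) → r.1 ≤ δ₁ := by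
      intro x ω r hr
      have hs0 : (0:ℝ) < r.1 := r.2
      rw [hnorm_smul r.1 hs0 ω] at hr
      have h1 : l * (r.1 ^ ((N:ℝ)/p) * r.1) ≤ C * r.1 := by
        have h2 : |u x - u (x + r.1 • ω.1)| ≤ C * ‖x - (x + r.1 • ω.1)‖ := hLip _ _
        rw [sub_add_cancel_left, norm_neg, hnorm_smul r.1 hs0 ω] at h2
        calc l * (r.1 ^ ((N:ℝ)/p) * r.1) = l * r.1 ^ ((N:ℝ)/p + 1) := by
              rw [Real.rpow_add hs0, Real.rpow_one]
          _ ≤ |u x - u (x + r.1 • ω.1)| := hr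
          _ ≤ C * r.1 := h2
      have h3 : l * r.1 ^ ((N:ℝ)/p) ≤ C := by
        have h3' : l * r.1 ^ ((N:ℝ)/p) * r.1 ≤ C * r.1 := by
          rw [mul_assoc]; exact h1
        exact (mul_le_mul_iff_of_pos_right hs0).1 h3'
      have h6 : C ≤ l * δ₁ ^ ((N:ℝ)/p) := (div_le_iff₀ (Real.rpow_pos_of_pos hδ₁0 _)).1 hlC
      have h7 : r.1 ^ ((N:ℝ)/p) ≤ δ₁ ^ ((N:ℝ)/p) := by
        have h5 : r.1 ^ ((N:ℝ)/p) ≤ C / l := (le_div_iff₀ hl0).2 (by linarith [mul_comm l (r.1 ^ ((N:ℝ)/p))])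
        have h8 : C / l ≤ δ₁ ^ ((N:ℝ)/p) := by
          rw [div_le_iff₀ hl0]
          linarith [mul_comm l (δ₁ ^ ((N:ℝ)/p))]
        exact h5.trans h8
      exact rpow_le_base hs0.le hδ₁0.le hq h7
    have hbound : ∀ (x : EuclideanSpace ℝ (Fin N))
        (ω : Metric.sphere (0 : EuclideanSpace ℝ (Fin N)) 1),
        Measure.volumeIoiPow (N - 1)
          {r : Set.Ioi (0:ℝ) | |u x - u (x + r.1 • ω.1)| ≥ l * ‖r.1 • ω.1‖ ^ ((N:ℝ)/p + 1)}
          ≤ K₁.indicator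
              (fun y => ENNReal.ofReal ((|⟪v y, ω.1⟫| + ε) ^ p / (N * l ^ p))) x := by
      intro x ω
      by_cases hx : x ∈ K₁
      · rw [Set.indicator_of_mem hx]
        set g : ℝ := |⟪v x, ω.1⟫| with hgdef
        have hg0 : 0 ≤ g := abs_nonneg _
        have hgε : 0 < (g + ε) / l := by positivity
        set R : ℝ := ((g + ε) / l) ^ ((N:ℝ)/p)⁻¹ with hRdef
        have hR0 : 0 < R := Real.rpow_pos_of_pos hgε _
        have hsub : {r : Set.Ioi (0:ℝ) |
            |u x - u (x + r.1 • ω.1)| ≥ l * ‖r.1 • ω.1‖ ^ ((N:ℝ)/p + 1)}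
            ⊆ {r : Set.Ioi (0:ℝ) | r.1 ≤ R} := by
          intro r hr
          have hs0 : (0:ℝ) < r.1 := r.2
          have hrδ : r.1 ≤ δ := (hsmall x ω r hr).trans hδ₁δ
          have htay2 := hδ x (r.1 • ω.1) (by rw [hnorm_smul r.1 hs0 ω]; exact hrδ)
          rw [hnorm_smul r.1 hs0 ω] at htay2
          have hB : |fderiv ℝ u x (r.1 • ω.1)| = r.1 * g := by
            rw [hgdef, hvinner]
            rw [(fderiv ℝ u x).map_smul, smul_eq_mul, abs_mul, abs_of_pos hs0]
          have hA : |u x - u (x + r.1 • ω.1)| ≤ r.1 * (g + ε) := by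
            rw [abs_sub_comm]
            have : u (x + r.1 • ω.1) - u x
                = (u (x + r.1 • ω.1) - u x - fderiv ℝ u x (r.1 • ω.1))
                  + fderiv ℝ u x (r.1 • ω.1) := by ring
            rw [this]
            calc |_ + fderiv ℝ u x (r.1 • ω.1)|
                ≤ |u (x + r.1 • ω.1) - u x - fderiv ℝ u x (r.1 • ω.1)|
                  + |fderiv ℝ u x (r.1 • ω.1)| := abs_add_le _ _
              _ ≤ ε * r.1 + r.1 * g := add_le_add htay2 (le_of_eq hB)
              _ = r.1 * (g + ε) := by ring
          have hr2 : l * (r.1 ^ ((N:ℝ)/p) * r.1) ≤ r.1 * (g + ε) := by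
            have hr' := hr
            rw [Set.mem_setOf_eq, hnorm_smul r.1 hs0 ω] at hr'
            calc l * (r.1 ^ ((N:ℝ)/p) * r.1) = l * r.1 ^ ((N:ℝ)/p + 1) := by
                  rw [Real.rpow_add hs0, Real.rpow_one]
              _ ≤ |u x - u (x + r.1 • ω.1)| := hr'
              _ ≤ r.1 * (g + ε) := hA
          have hr3 : l * r.1 ^ ((N:ℝ)/p) ≤ g + ε := by
            have h3' : l * r.1 ^ ((N:ℝ)/p) * r.1 ≤ (g + ε) * r.1 := by
              rw [mul_assoc]; linarith [mul_comm r.1 (g + ε)]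
            exact (mul_le_mul_iff_of_pos_right hs0).1 h3'
          have hr4 : r.1 ^ ((N:ℝ)/p) ≤ R ^ ((N:ℝ)/p) := by
            rw [hRdef, ← Real.rpow_mul hgε.le, inv_mul_cancel₀ hq.ne', Real.rpow_one]
            rw [le_div_iff₀ hl0]
            linarith [mul_comm l (r.1 ^ ((N:ℝ)/p))]
          exact rpow_le_base hs0.le hR0.le hq hr4
        refine le_trans (measure_mono hsub) (le_of_eq ?_)
        rw [vip_Iic (N - 1) hR0.le, Nat.sub_add_cancel hN]
        congr 1
        have hc1 : ((N - 1 : ℕ) : ℝ) + 1 = (N:ℝ) := by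
          rw [Nat.cast_sub hN, Nat.cast_one]; ring
        rw [hc1]
        have hRN : R ^ (N : ℕ) = (g + ε) ^ p / l ^ p := by
          rw [hRdef, ← Real.rpow_natCast (((g + ε) / l) ^ ((N:ℝ)/p)⁻¹) N,
            ← Real.rpow_mul hgε.le]
          have hexp : ((N:ℝ)/p)⁻¹ * ((N : ℕ) : ℝ) = p := by
            rw [inv_div]
            field_simp
          rw [hexp, Real.div_rpow (by positivity) hl0.le]
        rw [hRN, div_div, mul_comm ((l:ℝ) ^ p) (N:ℝ)]
      · rw [Set.indicator_of_notMem hx]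
        have hxK : x ∉ tsupport u := fun hmem =>
          hx (Metric.self_subset_cthickening _ hmem)
        have hempty : {r : Set.Ioi (0:ℝ) |
            |u x - u (x + r.1 • ω.1)| ≥ l * ‖r.1 • ω.1‖ ^ ((N:ℝ)/p + 1)} = ∅ := by
          rw [Set.eq_empty_iff_forall_notMem]
          intro r hr
          have hs0 : (0:ℝ) < r.1 := r.2
          have hr1 : r.1 ≤ 1 := (hsmall x ω r hr).trans hδ₁1
          have hu1 : u x = 0 := image_eq_zero_of_notMem_tsupport hxK
          have hu2 : u (x + r.1 • ω.1) = 0 := by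
            refine image_eq_zero_of_notMem_tsupport fun hmem => hx ?_
            refine Metric.mem_cthickening_of_dist_le x (x + r.1 • ω.1) 1 _ hmem ?_
            rw [dist_eq_norm, sub_add_cancel_left, norm_neg, hnorm_smul r.1 hs0 ω]
            exact hr1
          rw [Set.mem_setOf_eq, hu1, hu2, sub_zero, abs_zero, hnorm_smul r.1 hs0 ω] at hr
          have : 0 < l * r.1 ^ ((N:ℝ)/p + 1) :=
            mul_pos hl0 (Real.rpow_pos_of_pos hs0 _)
          linarith
        rw [hempty]
        simp
    have hEq := measure_E_eq N u hucont l ((N:ℝ)/p + 1) hα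
    have hc0 : ENNReal.ofReal (l ^ p) ≠ 0 := by
      simp only [ne_eq, ENNReal.ofReal_eq_zero, not_le]
      exact hlp0
    have hcinv : (ENNReal.ofReal (l ^ p))⁻¹ ≠ ⊤ := ENNReal.inv_ne_top.2 hc0
    have hptw : ∀ (y : EuclideanSpace ℝ (Fin N))
        (ω : Metric.sphere (0 : EuclideanSpace ℝ (Fin N)) 1),
        ENNReal.ofReal ((|⟪v y, ω.1⟫| + ε) ^ p / (N * l ^ p))
        = ENNReal.ofReal ((|⟪v y, ω.1⟫| + ε) ^ p / N) * (ENNReal.ofReal (l ^ p))⁻¹ := by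
      intro y ω
      rw [← ENNReal.ofReal_inv_of_pos hlp0, ← ENNReal.ofReal_mul (by positivity)]
      congr 1
      field_simp
    have hle2 : ENNReal.ofReal (l ^ p) *
        volume {q : EuclideanSpace ℝ (Fin N) × EuclideanSpace ℝ (Fin N) | q.1 ≠ q.2 ∧
          |u q.1 - u q.2| ≥ l * ‖q.1 - q.2‖ ^ ((N : ℝ) / p + 1)} ≤ Φ ε := by
      rw [hEq]
      have step1 : ∫⁻ x, ∫⁻ ω : Metric.sphere (0 : EuclideanSpace ℝ (Fin N)) 1,
          Measure.volumeIoiPow (N - 1)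
            {r : Set.Ioi (0:ℝ) |
              |u x - u (x + r.1 • ω.1)| ≥ l * ‖r.1 • ω.1‖ ^ ((N:ℝ)/p + 1)} ∂σ
          ≤ ∫⁻ x, K₁.indicator (fun y =>
              ∫⁻ ω : Metric.sphere (0 : EuclideanSpace ℝ (Fin N)) 1,
                ENNReal.ofReal ((|⟪v y, ω.1⟫| + ε) ^ p / (N * l ^ p)) ∂σ) x := by
        refine lintegral_mono fun x => ?_
        by_cases hx : x ∈ K₁
        · rw [Set.indicator_of_mem hx]
          refine lintegral_mono fun ω => ?_
          have := hbound x ω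
          rwa [Set.indicator_of_mem hx] at this
        · rw [Set.indicator_of_notMem hx]
          have hz : ∀ ω : Metric.sphere (0 : EuclideanSpace ℝ (Fin N)) 1,
              Measure.volumeIoiPow (N - 1)
                {r : Set.Ioi (0:ℝ) |
                  |u x - u (x + r.1 • ω.1)| ≥ l * ‖r.1 • ω.1‖ ^ ((N:ℝ)/p + 1)} = 0 := by
            intro ω
            refine le_antisymm ?_ zero_le
            have := hbound x ω
            rwa [Set.indicator_of_notMem hx] at this
          rw [lintegral_congr hz, lintegral_zero]
      calc ENNReal.ofReal (l ^ p) * ∫⁻ x, ∫⁻ ω : Metric.sphere (0 : EuclideanSpace ℝ (Fin N)) 1,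
            Measure.volumeIoiPow (N - 1)
              {r : Set.Ioi (0:ℝ) |
                |u x - u (x + r.1 • ω.1)| ≥ l * ‖r.1 • ω.1‖ ^ ((N:ℝ)/p + 1)} ∂σ
          ≤ ENNReal.ofReal (l ^ p) * ∫⁻ x, K₁.indicator (fun y =>
              ∫⁻ ω : Metric.sphere (0 : EuclideanSpace ℝ (Fin N)) 1,
                ENNReal.ofReal ((|⟪v y, ω.1⟫| + ε) ^ p / (N * l ^ p)) ∂σ) x :=
            mul_le_mul_right step1 _
        _ = ENNReal.ofReal (l ^ p) * ∫⁻ x in K₁,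
              ∫⁻ ω : Metric.sphere (0 : EuclideanSpace ℝ (Fin N)) 1,
                ENNReal.ofReal ((|⟪v x, ω.1⟫| + ε) ^ p / (N * l ^ p)) ∂σ := by
            rw [lintegral_indicator hK₁m]
        _ = ENNReal.ofReal (l ^ p) * ((∫⁻ x in K₁,
              ∫⁻ ω : Metric.sphere (0 : EuclideanSpace ℝ (Fin N)) 1,
                ENNReal.ofReal ((|⟪v x, ω.1⟫| + ε) ^ p / N) ∂σ) * (ENNReal.ofReal (l ^ p))⁻¹) := by
            congr 1
            rw [← lintegral_mul_const' _ _ hcinv]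
            refine lintegral_congr fun y => ?_
            rw [← lintegral_mul_const' _ _ hcinv]
            exact lintegral_congr fun ω => hptw y ω
        _ = Φ ε := by
            rw [mul_comm, mul_assoc, ENNReal.inv_mul_cancel hc0 ENNReal.ofReal_ne_top, mul_one]
    have h9 : l ^ p * (volume {q : EuclideanSpace ℝ (Fin N) × EuclideanSpace ℝ (Fin N) |
        q.1 ≠ q.2 ∧ |u q.1 - u q.2| ≥ l * ‖q.1 - q.2‖ ^ ((N : ℝ) / p + 1)}).toReal
        = (ENNReal.ofReal (l ^ p) *
          volume {q : EuclideanSpace ℝ (Fin N) × EuclideanSpace ℝ (Fin N) | q.1 ≠ q.2 ∧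
            |u q.1 - u q.2| ≥ l * ‖q.1 - q.2‖ ^ ((N : ℝ) / p + 1)}).toReal := by
      rw [ENNReal.toReal_mul, ENNReal.toReal_ofReal (Real.rpow_nonneg hl0.le p)]
    rw [h9]
    exact ENNReal.toReal_mono (hΦ_ne_top ε hε.le hε1) hle2
  have hcob : Filter.IsCoboundedUnder (· ≤ ·) Filter.atTop
      (fun l : ℝ => l ^ p *
        (volume {q : EuclideanSpace ℝ (Fin N) × EuclideanSpace ℝ (Fin N) | q.1 ≠ q.2 ∧
          |u q.1 - u q.2| ≥ l * ‖q.1 - q.2‖ ^ ((N : ℝ) / p + 1)}).toReal) := by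
    refine Filter.isCoboundedUnder_le_of_eventually_le Filter.atTop (x := 0) ?_
    filter_upwards [Filter.eventually_ge_atTop (0:ℝ)] with l hl
    exact mul_nonneg (Real.rpow_nonneg hl p) ENNReal.toReal_nonneg
  have hlimsup_le : ∀ ε : ℝ, 0 < ε → ε ≤ 1 → Filter.limsup
      (fun l : ℝ => l ^ p *
        (volume {q : EuclideanSpace ℝ (Fin N) × EuclideanSpace ℝ (Fin N) | q.1 ≠ q.2 ∧
          |u q.1 - u q.2| ≥ l * ‖q.1 - q.2‖ ^ ((N : ℝ) / p + 1)}).toReal)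
      Filter.atTop ≤ (Φ ε).toReal := fun ε h1 h2 =>
    Filter.limsup_le_of_le hcob (hmain ε h1 h2)
  have hΦtend : Filter.Tendsto (fun n : ℕ => (Φ (1 / (n + 1))).toReal)
      Filter.atTop (nhds ((Φ 0).toReal)) := by
    have hjoint : Continuous (fun y : EuclideanSpace ℝ (Fin N) ×
        Metric.sphere (0 : EuclideanSpace ℝ (Fin N)) 1 => |⟪v y.1, y.2.1⟫|) :=
      ((hvc.comp continuous_fst).inner (continuous_subtype_val.comp continuous_snd)).abs
    have hmeasF : ∀ ε : ℝ, Measurable fun y : EuclideanSpace ℝ (Fin N) ×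
        Metric.sphere (0 : EuclideanSpace ℝ (Fin N)) 1 =>
        ENNReal.ofReal ((|⟪v y.1, y.2.1⟫| + ε) ^ p / N) := fun ε =>
      (ENNReal.continuous_ofReal.comp (((hjoint.add continuous_const).rpow_const
        (fun y => Or.inr hp0.le)).div_const _)).measurable
    have hΦprod : ∀ ε : ℝ, Φ ε = ∫⁻ y, ENNReal.ofReal ((|⟪v y.1, y.2.1⟫| + ε) ^ p / N)
        ∂(((volume : Measure (EuclideanSpace ℝ (Fin N))).restrict K₁).prod σ) := by
      intro ε
      rw [lintegral_prod _ (hmeasF ε).aemeasurable]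
    have hΦtendE : Filter.Tendsto (fun n : ℕ => Φ (1 / (n + 1))) Filter.atTop (nhds (Φ 0)) := by
      simp only [hΦprod]
      refine tendsto_lintegral_of_dominated_convergence
        (fun _ => ENNReal.ofReal ((C + 1) ^ p / N)) (fun n => hmeasF _) (fun n => ?_) ?_ ?_
      · refine Filter.Eventually.of_forall fun y => ENNReal.ofReal_le_ofReal ?_
        have hn1 : (1:ℝ) / (n + 1) ≤ 1 := by
          rw [div_le_one (by positivity)]
          linarith [Nat.cast_nonneg (α := ℝ) n]
        have h1 : (|⟪v y.1, y.2.1⟫| + 1 / (n + 1)) ^ p ≤ (C + 1) ^ p :=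
          Real.rpow_le_rpow (by positivity) (add_le_add (hvC y.1 y.2) hn1) hp0.le
        exact div_le_div_of_nonneg_right h1 hN0.le
      · rw [lintegral_const, ← Set.univ_prod_univ, Measure.prod_prod,
          Measure.restrict_apply_univ]
        exact ENNReal.mul_ne_top ENNReal.ofReal_ne_top
          (ENNReal.mul_ne_top hK₁c.measure_lt_top.ne (measure_ne_top σ _))
      · refine Filter.Eventually.of_forall fun y => ?_
        have hbase : ContinuousAt (fun t : ℝ => |⟪v y.1, y.2.1⟫| + t) 0 := by fun_prop
        have h2 : ContinuousAt (fun t : ℝ => (|⟪v y.1, y.2.1⟫| + t) ^ p) 0 :=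
          (Real.continuousAt_rpow_const _ _ (Or.inr hp0.le)).comp hbase
        have h3 : ContinuousAt (fun t : ℝ =>
            ENNReal.ofReal ((|⟪v y.1, y.2.1⟫| + t) ^ p / N)) 0 :=
          ENNReal.continuous_ofReal.continuousAt.comp (h2.div_const _)
        have h4 := h3.tendsto.comp tendsto_one_div_add_atTop_nhds_zero_nat
        simpa [Function.comp_def] using h4
    have hΦtendaux := (ENNReal.tendsto_toReal (hΦ_ne_top 0 le_rfl zero_le_one)).comp hΦtendE
    exact hΦtendaux
  have hfinal : Filter.limsup
      (fun l : ℝ => l ^ p *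
        (volume {q : EuclideanSpace ℝ (Fin N) × EuclideanSpace ℝ (Fin N) | q.1 ≠ q.2 ∧
          |u q.1 - u q.2| ≥ l * ‖q.1 - q.2‖ ^ ((N : ℝ) / p + 1)}).toReal)
      Filter.atTop ≤ (Φ 0).toReal := by
    refine ge_of_tendsto' hΦtend fun n => hlimsup_le _ (by positivity) ?_
    rw [div_le_one (by positivity)]
    linarith [Nat.cast_nonneg (α := ℝ) n]
  refine hfinal.trans (le_of_eq ?_)
  have hκ_fin : κ ≠ ⊤ := by
    have hb : κ ≤ ∫⁻ _ω : Metric.sphere (0 : EuclideanSpace ℝ (Fin N)) 1,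
        ENNReal.ofReal 1 ∂σ := by
      refine lintegral_mono fun ω => ENNReal.ofReal_le_ofReal ?_
      refine Real.rpow_le_one (abs_nonneg _) ?_ hp0.le
      calc |⟪e, ω.1⟫| ≤ ‖e‖ * ‖ω.1‖ := abs_real_inner_le_norm _ _
        _ = 1 := by rw [he, mem_sphere_zero_iff_norm.1 ω.2, mul_one]
    rw [lintegral_const] at hb
    intro htop
    rw [htop] at hb
    exact (ENNReal.mul_lt_top ENNReal.ofReal_lt_top (measure_lt_top σ _)).ne (top_le_iff.1 hb)
  have hNcast0 : ((N:ℝ≥0∞)) ≠ 0 := Nat.cast_ne_zero.2 (by omega)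
  have hNinv_ne : ((N:ℝ≥0∞))⁻¹ ≠ ⊤ := ENNReal.inv_ne_top.2 hNcast0
  have hκc_ne : κ * ((N:ℝ≥0∞))⁻¹ ≠ ⊤ := ENNReal.mul_ne_top hκ_fin hNinv_ne
  have hstep1 : ∀ x : EuclideanSpace ℝ (Fin N),
      (∫⁻ ω : Metric.sphere (0 : EuclideanSpace ℝ (Fin N)) 1,
        ENNReal.ofReal ((|⟪v x, ω.1⟫| + 0) ^ p / N) ∂σ)
      = ENNReal.ofReal (‖fderiv ℝ u x‖ ^ p) * (κ * ((N:ℝ≥0∞))⁻¹) := by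
    intro x
    have hptw2 : ∀ ω : Metric.sphere (0 : EuclideanSpace ℝ (Fin N)) 1,
        ENNReal.ofReal ((|⟪v x, ω.1⟫| + 0) ^ p / N)
        = ENNReal.ofReal (|⟪v x, ω.1⟫| ^ p) * ((N:ℝ≥0∞))⁻¹ := by
      intro ω
      rw [add_zero, div_eq_mul_inv, ENNReal.ofReal_mul (by positivity),
        ENNReal.ofReal_inv_of_pos hN0, ENNReal.ofReal_natCast]
    simp only [hptw2]
    rw [lintegral_mul_const' _ _ hNinv_ne, hσdef,
      lintegral_inner_rpow_sphere hp e (v x) he, hvnorm, mul_assoc]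
  have hext : ∫⁻ x in K₁, ENNReal.ofReal (‖fderiv ℝ u x‖ ^ p)
      = ∫⁻ x, ENNReal.ofReal (‖fderiv ℝ u x‖ ^ p) := by
    rw [← lintegral_indicator hK₁m]
    refine lintegral_congr fun x => ?_
    by_cases hx : x ∈ K₁
    · simp [hx]
    · have h0 : fderiv ℝ u x = 0 := image_eq_zero_of_notMem_tsupport
        (fun hmem => hx (Metric.self_subset_cthickening _ (tsupport_fderiv_subset ℝ hmem)))
      simp [hx, h0, Real.zero_rpow hp0.ne']
  have hΦ0eq : Φ 0 = (∫⁻ x, ENNReal.ofReal (‖fderiv ℝ u x‖ ^ p)) * (κ * ((N:ℝ≥0∞))⁻¹) := by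
    simp only [hΦdef]
    calc ∫⁻ x in K₁, ∫⁻ ω : Metric.sphere (0 : EuclideanSpace ℝ (Fin N)) 1,
          ENNReal.ofReal ((|⟪v x, ω.1⟫| + 0) ^ p / N) ∂σ
        = ∫⁻ x in K₁, ENNReal.ofReal (‖fderiv ℝ u x‖ ^ p) * (κ * ((N:ℝ≥0∞))⁻¹) :=
          lintegral_congr fun x => hstep1 x
      _ = (∫⁻ x in K₁, ENNReal.ofReal (‖fderiv ℝ u x‖ ^ p)) * (κ * ((N:ℝ≥0∞))⁻¹) :=
          lintegral_mul_const' _ _ hκc_ne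
      _ = (∫⁻ x, ENNReal.ofReal (‖fderiv ℝ u x‖ ^ p)) * (κ * ((N:ℝ≥0∞))⁻¹) := by rw [hext]
  have hκreal : ∫ ω : Metric.sphere (0 : EuclideanSpace ℝ (Fin N)) 1,
      |⟪e, ω.1⟫| ^ p ∂σ = κ.toReal := by
    rw [hκdef, integral_eq_lintegral_of_nonneg_ae
      (Filter.Eventually.of_forall fun ω => by positivity)
      (((continuous_const.inner continuous_subtype_val).abs.rpow_const
        (fun x => Or.inr hp0.le)).aestronglyMeasurable)]
  have hLreal : ∫ x, ‖fderiv ℝ u x‖ ^ p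
      = (∫⁻ x, ENNReal.ofReal (‖fderiv ℝ u x‖ ^ p)).toReal := by
    rw [integral_eq_lintegral_of_nonneg_ae
      (Filter.Eventually.of_forall fun x => by positivity)
      ((hf'c.norm.rpow_const (fun x => Or.inr hp0.le)).aestronglyMeasurable)]
  rw [hΦ0eq, ENNReal.toReal_mul, ENNReal.toReal_mul, ENNReal.toReal_inv, ENNReal.toReal_natCast,
    ← hκreal, ← hLreal]
  rw [div_eq_mul_inv]
  ring
end

section
/- (Lusin–Lipschitz inequality) There exists a constant C = C(N) such that for every u ∈ C^∞_c(ℝ^N) and all x, y ∈ ℝ^N: |u(x) - u(y)| ≤ C |x-y| (M|∇u|(x) + M|∇u|(y)), where M denotes the Hardy–Littlewood maximal function. -/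
open MeasureTheory Metric Set

/-- The (uncentered-radius) Hardy–Littlewood maximal function of `g` at `x`:
`M g (x) = sup_{r>0} (1/|B(x,r)|) ∫_{B(x,r)} |g|`. -/
noncomputable def hlMaximal {N : ℕ} (g : EuclideanSpace ℝ (Fin N) → ℝ)
    (x : EuclideanSpace ℝ (Fin N)) : ENNReal :=
  ⨆ (r : ℝ) (_ : 0 < r),
    (volume (Metric.ball x r))⁻¹ * ∫⁻ y in Metric.ball x r, ENNReal.ofReal |g y|


variable {N : ℕ}

lemma ftc_bound (u : EuclideanSpace ℝ (Fin N) → ℝ) (hu : ContDiff ℝ (⊤ : ℕ∞) u)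
    (a b : EuclideanSpace ℝ (Fin N)) :
    ENNReal.ofReal |u b - u a| ≤
      ∫⁻ t in Set.Ioc (0:ℝ) 1,
        ENNReal.ofReal (‖fderiv ℝ u (a + t • (b - a))‖ * ‖b - a‖) := by
  have hd : ∀ t : ℝ, HasDerivAt (fun s : ℝ => u (a + s • (b - a)))
      (fderiv ℝ u (a + t • (b - a)) (b - a)) t := by
    intro t
    have h1 : HasDerivAt (fun s : ℝ => a + s • (b - a)) (b - a) t := by
      simpa using ((hasDerivAt_id t).smul_const (b - a)).const_add a
    exact (((hu.differentiable (by simp)) _).hasFDerivAt).comp_hasDerivAt t h1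
  have hgc : Continuous (fderiv ℝ u) := hu.continuous_fderiv (by simp)
  have hcont : Continuous fun t : ℝ => fderiv ℝ u (a + t • (b - a)) (b - a) := by
    exact (hgc.comp (by continuity)).clm_apply continuous_const
  have key : ∫ t in (0:ℝ)..1, fderiv ℝ u (a + t • (b - a)) (b - a) = u b - u a := by
    have := intervalIntegral.integral_eq_sub_of_hasDerivAt
      (f := fun s : ℝ => u (a + s • (b - a)))
      (fun t _ => hd t) (hcont.intervalIntegrable 0 1)
    simpa using this
  have habs : |u b - u a| ≤ ∫ t in Set.Ioc (0:ℝ) 1,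
      ‖fderiv ℝ u (a + t • (b - a))‖ * ‖b - a‖ := by
    rw [← key, ← Real.norm_eq_abs]
    calc ‖∫ t in (0:ℝ)..1, fderiv ℝ u (a + t • (b - a)) (b - a)‖
        ≤ ∫ t in Set.Ioc (0:ℝ) 1, ‖fderiv ℝ u (a + t • (b - a)) (b - a)‖ := by
          rw [intervalIntegral.integral_of_le (by norm_num : (0:ℝ) ≤ 1)]
          exact norm_integral_le_integral_norm _
      _ ≤ ∫ t in Set.Ioc (0:ℝ) 1, ‖fderiv ℝ u (a + t • (b - a))‖ * ‖b - a‖ := by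
          refine integral_mono_of_nonneg (ae_of_all _ fun t => norm_nonneg _) ?_
            (ae_of_all _ fun t => ContinuousLinearMap.le_opNorm _ _)
          exact ((hgc.comp (by continuity)).norm.mul continuous_const).integrableOn_Ioc
  refine (ENNReal.ofReal_le_ofReal habs).trans (le_of_eq ?_)
  exact ofReal_integral_eq_lintegral_ofReal
    (((hgc.comp (by continuity)).norm.mul continuous_const).integrableOn_Ioc)
    (ae_of_all _ fun t => mul_nonneg (norm_nonneg _) (norm_nonneg _))

lemma scale_step (g : EuclideanSpace ℝ (Fin N) → ENNReal) (hg : Measurable g)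
    (a c : EuclideanSpace ℝ (Fin N)) {r t : ℝ} (ht : 0 < t) (hac : ‖c - a‖ ≤ r) :
    ∫⁻ z in ball c r, g (a + t • (z - a)) ≤
      (ENNReal.ofReal (t ^ N))⁻¹ * ∫⁻ w in ball a (2 * t * r), g w := by
  set φ : EuclideanSpace ℝ (Fin N) → EuclideanSpace ℝ (Fin N) :=
    fun z => a + t • (z - a) with hφ
  have hφc : Continuous φ :=
    continuous_const.add ((continuous_id.sub continuous_const).const_smul t)
  have hφm : Measurable φ := hφc.measurable
  have hmap : Measure.map φ volume = (ENNReal.ofReal (t ^ N))⁻¹ • volume := by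
    have h1 : φ = (fun w => (a - t • a) + w) ∘ (fun z : EuclideanSpace ℝ (Fin N) => t • z) := by
      funext z; simp [φ, smul_sub]; abel
    rw [h1, ← Measure.map_map (measurable_const_add _) (measurable_const_smul t),
      Measure.map_addHaar_smul volume (ne_of_gt ht), Measure.map_smul,
      MeasureTheory.map_add_left_eq_self]
    congr 1
    rw [finrank_euclideanSpace, Fintype.card_fin, abs_of_nonneg (by positivity),
      ENNReal.ofReal_inv_of_pos (by positivity)]
  have himg : ∀ z ∈ ball c r, φ z ∈ ball a (2 * t * r) := by
    intro z hz
    have hzc : dist z c < r := mem_ball.mp hz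
    have : dist (φ z) a = t * ‖z - a‖ := by
      simp [φ, dist_eq_norm, norm_smul, abs_of_nonneg ht.le]
    rw [mem_ball, this]
    have hza : ‖z - a‖ < 2 * r := by
      calc ‖z - a‖ = ‖(z - c) + (c - a)‖ := by abel_nf
        _ ≤ ‖z - c‖ + ‖c - a‖ := norm_add_le _ _
        _ < r + r := by
            have := dist_eq_norm z c ▸ hzc
            linarith
        _ = 2 * r := by ring
    calc t * ‖z - a‖ < t * (2 * r) := by
          exact mul_lt_mul_of_pos_left hza ht
      _ = 2 * t * r := by ring
  calc ∫⁻ z in ball c r, g (φ z)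
      = ∫⁻ z in ball c r, (ball a (2 * t * r)).indicator g (φ z) := by
        refine setLIntegral_congr_fun measurableSet_ball (fun z hz => ?_)
        rw [Set.indicator_of_mem (himg z hz)]
    _ ≤ ∫⁻ z, (ball a (2 * t * r)).indicator g (φ z) :=
        setLIntegral_le_lintegral _ _
    _ = ∫⁻ w, (ball a (2 * t * r)).indicator g w ∂(Measure.map φ volume) :=
        (lintegral_map (hg.indicator measurableSet_ball) hφm).symm
    _ = (ENNReal.ofReal (t ^ N))⁻¹ * ∫⁻ w in ball a (2 * t * r), g w := by
        rw [hmap, lintegral_smul_measure, lintegral_indicator measurableSet_ball _, smul_eq_mul]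

lemma hl_ge (g : EuclideanSpace ℝ (Fin N) → ℝ) (a : EuclideanSpace ℝ (Fin N))
    {s : ℝ} (hs : 0 < s) :
    (volume (ball a s))⁻¹ * ∫⁻ w in ball a s, ENNReal.ofReal |g w| ≤ hlMaximal g a :=
  le_iSup_of_le s (le_iSup_of_le hs le_rfl)

lemma lint_le_vol_mul (hN : 1 ≤ N) (g : EuclideanSpace ℝ (Fin N) → ℝ)
    (a : EuclideanSpace ℝ (Fin N)) {s : ℝ} (hs : 0 < s) :
    ∫⁻ w in ball a s, ENNReal.ofReal |g w| ≤ volume (ball a s) * hlMaximal g a := by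
  haveI : Nonempty (Fin N) := Fin.pos_iff_nonempty.mp hN
  have h0 : volume (ball a s) ≠ 0 := (measure_ball_pos volume a hs).ne'
  have htop : volume (ball a s) ≠ ⊤ := measure_ball_lt_top.ne
  calc ∫⁻ w in ball a s, ENNReal.ofReal |g w|
      = volume (ball a s) * ((volume (ball a s))⁻¹ * ∫⁻ w in ball a s, ENNReal.ofReal |g w|) := by
        rw [← mul_assoc, ENNReal.mul_inv_cancel h0 htop, one_mul]
    _ ≤ volume (ball a s) * hlMaximal g a := by
        exact mul_le_mul_right (hl_ge g a hs) _

lemma sub_avg (hN : 1 ≤ N) (u : EuclideanSpace ℝ (Fin N) → ℝ) (hu : ContDiff ℝ (⊤ : ℕ∞) u)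
    (a c : EuclideanSpace ℝ (Fin N)) {r : ℝ} (hr : 0 < r) (hac : ‖c - a‖ ≤ r) :
    ∫⁻ z in ball c r, ENNReal.ofReal |u a - u z| ≤
      ENNReal.ofReal (2 ^ (N + 1) * r) * volume (ball c r) *
        hlMaximal (fun z => ‖fderiv ℝ u z‖) a := by
  haveI : Nonempty (Fin N) := Fin.pos_iff_nonempty.mp hN
  set g : EuclideanSpace ℝ (Fin N) → ℝ := fun z => ‖fderiv ℝ u z‖ with hg
  set M : ENNReal := hlMaximal g a with hM
  have hgc : Continuous g := (hu.continuous_fderiv (by simp)).norm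
  -- the two-variable integrand
  set F : EuclideanSpace ℝ (Fin N) → ℝ → ENNReal :=
    fun z t => ENNReal.ofReal (g (a + t • (z - a))) with hF
  have hFc : Continuous fun p : EuclideanSpace ℝ (Fin N) × ℝ => F p.1 p.2 := by
    apply ENNReal.continuous_ofReal.comp
    exact hgc.comp (continuous_const.add ((continuous_snd).smul
      (continuous_fst.sub continuous_const)))
  have hFm : Measurable fun p : EuclideanSpace ℝ (Fin N) × ℝ => F p.1 p.2 := hFc.measurable
  -- step 1: pointwise FTC bound
  have step1 : ∀ z ∈ ball c r, ENNReal.ofReal |u a - u z| ≤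
      (∫⁻ t in Set.Ioc (0:ℝ) 1, F z t) * ENNReal.ofReal (2 * r) := by
    intro z hz
    have hza : ‖z - a‖ ≤ 2 * r := by
      have hzc : ‖z - c‖ < r := by
        rw [← dist_eq_norm]; exact mem_ball.mp hz
      calc ‖z - a‖ = ‖(z - c) + (c - a)‖ := by abel_nf
        _ ≤ ‖z - c‖ + ‖c - a‖ := norm_add_le _ _
        _ ≤ 2 * r := by linarith
    rw [abs_sub_comm]
    refine (ftc_bound u hu a z).trans ?_
    rw [← lintegral_mul_const' _ _ ENNReal.ofReal_ne_top]
    refine lintegral_mono fun t => ?_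
    rw [ENNReal.ofReal_mul (norm_nonneg _)]
    exact mul_le_mul_right (ENNReal.ofReal_le_ofReal hza) _
  -- step 2: integrate over the ball and use Tonelli
  have meas_inner : Measurable fun z => (∫⁻ t in Set.Ioc (0:ℝ) 1, F z t) *
      ENNReal.ofReal (2 * r) :=
    (Measurable.lintegral_prod_right' (f := fun p : _ × ℝ => F p.1 p.2) hFm).mul_const _
  have step2 : ∫⁻ z in ball c r, ENNReal.ofReal |u a - u z| ≤
      (∫⁻ t in Set.Ioc (0:ℝ) 1, ∫⁻ z in ball c r, F z t) * ENNReal.ofReal (2 * r) := by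
    refine (setLIntegral_mono meas_inner step1).trans ?_
    rw [lintegral_mul_const' _ _ ENNReal.ofReal_ne_top, lintegral_lintegral_swap hFm.aemeasurable]
  -- step 3: bound the inner integral for each t
  have step3 : ∀ t ∈ Set.Ioc (0:ℝ) 1, ∫⁻ z in ball c r, F z t ≤
      ENNReal.ofReal (2 ^ N * r ^ N) * volume (ball (0 : EuclideanSpace ℝ (Fin N)) 1) * M := by
    intro t ht
    have ht0 : 0 < t := ht.1
    have h2tr : 0 < 2 * t * r := by positivity
    calc ∫⁻ z in ball c r, F z t
        ≤ (ENNReal.ofReal (t ^ N))⁻¹ * ∫⁻ w in ball a (2 * t * r), ENNReal.ofReal (g w) := by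
          exact scale_step (fun w => ENNReal.ofReal (g w))
            (ENNReal.measurable_ofReal.comp hgc.measurable) a c ht0 hac
      _ ≤ (ENNReal.ofReal (t ^ N))⁻¹ * (volume (ball a (2 * t * r)) * M) := by
          refine mul_le_mul_right ?_ _
          have := lint_le_vol_mul hN g a h2tr
          simpa [hg, abs_norm] using this
      _ = (ENNReal.ofReal (t ^ N))⁻¹ * (ENNReal.ofReal ((2 * t * r) ^ N) *
            volume (ball (0 : EuclideanSpace ℝ (Fin N)) 1) * M) := by
          rw [Measure.addHaar_ball volume a h2tr.le, finrank_euclideanSpace, Fintype.card_fin]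
      _ = ENNReal.ofReal (2 ^ N * r ^ N) * volume (ball (0 : EuclideanSpace ℝ (Fin N)) 1) * M := by
          have hpow : (2 * t * r) ^ N = t ^ N * (2 ^ N * r ^ N) := by ring
          rw [hpow, ENNReal.ofReal_mul (by positivity), ← mul_assoc, ← mul_assoc, ← mul_assoc,
            ENNReal.inv_mul_cancel (by simp [ENNReal.ofReal_pos]; positivity)
              ENNReal.ofReal_ne_top, one_mul]
  -- step 4: integrate over t
  have step4 : ∫⁻ t in Set.Ioc (0:ℝ) 1, ∫⁻ z in ball c r, F z t ≤
      ENNReal.ofReal (2 ^ N * r ^ N) * volume (ball (0 : EuclideanSpace ℝ (Fin N)) 1) * M := by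
    refine (setLIntegral_mono measurable_const step3).trans ?_
    rw [setLIntegral_const, Real.volume_Ioc]
    simp
  -- conclude
  refine step2.trans ?_
  refine (mul_le_mul_left step4 _).trans (le_of_eq ?_)
  rw [Measure.addHaar_ball volume c hr.le, finrank_euclideanSpace, Fintype.card_fin]
  have key : ENNReal.ofReal (2 ^ N * r ^ N) * ENNReal.ofReal (2 * r)
      = ENNReal.ofReal (2 ^ (N + 1) * r) * ENNReal.ofReal (r ^ N) := by
    rw [← ENNReal.ofReal_mul (by positivity), ← ENNReal.ofReal_mul (by positivity)]
    congr 1; ring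
  calc ENNReal.ofReal (2 ^ N * r ^ N) * volume (ball (0 : EuclideanSpace ℝ (Fin N)) 1) * M *
        ENNReal.ofReal (2 * r)
      = ENNReal.ofReal (2 ^ N * r ^ N) * ENNReal.ofReal (2 * r) *
          volume (ball (0 : EuclideanSpace ℝ (Fin N)) 1) * M := by ring
    _ = ENNReal.ofReal (2 ^ (N + 1) * r) *
          (ENNReal.ofReal (r ^ N) * volume (ball (0 : EuclideanSpace ℝ (Fin N)) 1)) * M := by
        rw [key]; ring

/-- Lusin–Lipschitz inequality: `|u(x) - u(y)| ≤ C |x-y| (M|∇u|(x) + M|∇u|(y))`. -/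
theorem lusin_lipschitz (N : ℕ) (hN : 1 ≤ N) :
    ∃ C : ℝ, 0 < C ∧ ∀ u : EuclideanSpace ℝ (Fin N) → ℝ,
      ContDiff ℝ (⊤ : ℕ∞) u → HasCompactSupport u → ∀ x y : EuclideanSpace ℝ (Fin N),
      ENNReal.ofReal (|u x - u y|) ≤ ENNReal.ofReal (C * ‖x - y‖) *
        (hlMaximal (fun z => ‖fderiv ℝ u z‖) x + hlMaximal (fun z => ‖fderiv ℝ u z‖) y) := by
  refine ⟨2 ^ (N + 1), by positivity, fun u hu _ x y => ?_⟩
  rcases eq_or_ne x y with rfl | hxy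
  · simp
  set r : ℝ := ‖x - y‖ with hr
  have hr0 : 0 < r := by
    rw [hr, norm_pos_iff, sub_ne_zero]; exact hxy
  set B := ball x r with hB
  set Mx := hlMaximal (fun z => ‖fderiv ℝ u z‖) x with hMx
  set My := hlMaximal (fun z => ‖fderiv ℝ u z‖) y with hMy
  have hV0 : volume B ≠ 0 := (measure_ball_pos volume x hr0).ne'
  have hVt : volume B ≠ ⊤ := measure_ball_lt_top.ne
  have hcont : Continuous u := hu.continuous
  have hmx : Measurable fun z => ENNReal.ofReal |u x - u z| := by
    apply Continuous.measurable
    exact ENNReal.continuous_ofReal.comp ((continuous_const.sub hcont).abs)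
  have key : ENNReal.ofReal |u x - u y| * volume B ≤
      ENNReal.ofReal (2 ^ (N + 1) * r) * volume B * (Mx + My) := by
    calc ENNReal.ofReal |u x - u y| * volume B
        = ∫⁻ z in B, ENNReal.ofReal |u x - u y| := (setLIntegral_const _ _).symm
      _ ≤ ∫⁻ z in B, (ENNReal.ofReal |u x - u z| + ENNReal.ofReal |u z - u y|) := by
          refine lintegral_mono fun z => ?_
          exact le_trans (ENNReal.ofReal_le_ofReal (abs_sub_le _ _ _)) ENNReal.ofReal_add_le
      _ = (∫⁻ z in B, ENNReal.ofReal |u x - u z|) + ∫⁻ z in B, ENNReal.ofReal |u z - u y| :=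
          lintegral_add_left hmx _
      _ ≤ ENNReal.ofReal (2 ^ (N + 1) * r) * volume B * Mx +
            ENNReal.ofReal (2 ^ (N + 1) * r) * volume B * My := by
          refine add_le_add ?_ ?_
          · exact sub_avg hN u hu x x hr0 (by simp [hr0.le])
          · have : ∀ z, |u z - u y| = |u y - u z| := fun z => abs_sub_comm _ _
            simp_rw [this]
            exact sub_avg hN u hu y x hr0 (by rw [hr])
      _ = ENNReal.ofReal (2 ^ (N + 1) * r) * volume B * (Mx + My) := by ring
  rw [mul_right_comm] at key
  exact (ENNReal.mul_le_mul_iff_left hV0 hVt).mp key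
end

section
/- There exists a constant C such that for every 1 < p < ∞ and every u ∈ C^∞_c(ℝ): sup_{λ>0} λ · 𝓛²({(x,y) ∈ ℝ² : x ≠ y, |u(x)-u(y)| ≥ λ |x-y|^{2/p}})^{1/p} ≤ C ∫_ℝ |u'|. (Weak-type substitute for the failed embedding Ẇ^{1,1}(ℝ) ⊂ W^{s,p}(ℝ) with s = 2/p - 1... i.e. N/p + s = 2/p.) -/
open MeasureTheory Set Metric

theorem quad_bound (u : ℝ → ℝ) (hu : ContDiff ℝ (⊤ : ℕ∞) u) (hs : HasCompactSupport u)
    (μ : ℝ) (hμ : 0 < μ) :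
    volume {q : ℝ × ℝ | q.1 ≠ q.2 ∧ |u q.1 - u q.2| ≥ μ * (q.1 - q.2) ^ 2}
      ≤ ENNReal.ofReal (16 * (∫ t, |deriv u t|) / μ) := by
  set g : ℝ → ℝ := deriv u with hg
  have hgc : Continuous g := hu.continuous_deriv (by simp)
  have hgi : Integrable g := hgc.integrable_of_hasCompactSupport hs.deriv
  have hgai : Integrable (fun t => |g t|) := hgi.abs
  set I : ℝ := ∫ t, |g t| with hI
  have hI0 : 0 ≤ I := integral_nonneg fun t => abs_nonneg _
  set ν : Measure ℝ := volume.withDensity (fun x => ENNReal.ofReal |g x|) with hν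
  have ν_apply : ∀ s : Set ℝ, MeasurableSet s → ν s = ∫⁻ x in s, ENNReal.ofReal |g x| :=
    fun s hs' => withDensity_apply _ hs'
  have ν_univ : ν univ = ENNReal.ofReal I := by
    rw [ν_apply univ MeasurableSet.univ, Measure.restrict_univ,
      ← ofReal_integral_eq_lintegral_ofReal hgai (Filter.Eventually.of_forall fun t => abs_nonneg _)]
  have ftc : ∀ a b : ℝ, u b - u a = ∫ t in a..b, g t := by
    intro a b
    exact (intervalIntegral.integral_deriv_eq_sub
      (fun t _ => (hu.differentiable (by simp)).differentiableAt) (hgc.intervalIntegrable a b)).symm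
  have hIcc : ∀ a b : ℝ, a ≤ b → ENNReal.ofReal |u b - u a| ≤ ν (Icc a b) := by
    intro a b hab
    have h1 : |u b - u a| ≤ ∫ t in a..b, |g t| := by
      rw [ftc a b]; exact intervalIntegral.abs_integral_le_integral_abs hab
    have h2 : (∫ t in a..b, |g t|) = ∫ t in Icc a b, |g t| := by
      rw [intervalIntegral.integral_of_le hab, integral_Icc_eq_integral_Ioc]
    have h3 : ν (Icc a b) = ENNReal.ofReal (∫ t in Icc a b, |g t|) := by
      rw [ν_apply _ measurableSet_Icc,
        ← ofReal_integral_eq_lintegral_ofReal (hgai.integrableOn)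
          (Filter.Eventually.of_forall fun t => abs_nonneg _)]
    rw [h3]
    exact ENNReal.ofReal_le_ofReal (h2 ▸ h1)
  set E := {q : ℝ × ℝ | q.1 ≠ q.2 ∧ |u q.1 - u q.2| ≥ μ * (q.1 - q.2) ^ 2} with hE
  set c : ℝ × ℝ → ℝ := fun q => (q.1 + q.2) / 2 with hc
  set ρ : ℝ × ℝ → ℝ := fun q => |q.1 - q.2| / 2 with hρ
  have ρ_nonneg : ∀ q : ℝ × ℝ, 0 ≤ ρ q := fun q => by positivity
  have ball_eq : ∀ q : ℝ × ℝ, closedBall (c q) (ρ q) = Icc (min q.1 q.2) (max q.1 q.2) := by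
    intro q
    rw [Real.closedBall_eq_Icc]
    rcases le_total q.1 q.2 with h | h
    · rw [min_eq_left h, max_eq_right h, hc, hρ]
      simp only [abs_of_nonpos (sub_nonpos.mpr h)]
      congr 1 <;> ring
    · rw [min_eq_right h, max_eq_left h, hc, hρ]
      simp only [abs_of_nonneg (sub_nonneg.mpr h)]
      congr 1 <;> ring
  have mass : ∀ q ∈ E, ENNReal.ofReal (μ * (2 * ρ q) ^ 2) ≤ ν (closedBall (c q) (ρ q)) := by
    intro q hq
    obtain ⟨hne, hineq⟩ := hq
    have h2ρ : 2 * ρ q = |q.1 - q.2| := by rw [hρ]; ring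
    have habs : |u (max q.1 q.2) - u (min q.1 q.2)| = |u q.1 - u q.2| := by
      rcases le_total q.1 q.2 with h | h
      · rw [min_eq_left h, max_eq_right h, abs_sub_comm]
      · rw [min_eq_right h, max_eq_left h]
    have hq2 : μ * (2 * ρ q) ^ 2 ≤ |u (max q.1 q.2) - u (min q.1 q.2)| := by
      rw [habs, h2ρ, sq_abs]; exact hineq
    calc ENNReal.ofReal (μ * (2 * ρ q) ^ 2)
        ≤ ENNReal.ofReal |u (max q.1 q.2) - u (min q.1 q.2)| := ENNReal.ofReal_le_ofReal hq2
      _ ≤ ν (Icc (min q.1 q.2) (max q.1 q.2)) := hIcc _ _ (min_le_max)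
      _ = ν (closedBall (c q) (ρ q)) := by rw [ball_eq]
  have rad_le : ∀ q ∈ E, ρ q ≤ Real.sqrt (I / μ) := by
    intro q hq
    have h1 := (mass q hq).trans ((measure_mono (subset_univ _)).trans ν_univ.le)
    have h2 : μ * (2 * ρ q) ^ 2 ≤ I := by
      exact (ENNReal.ofReal_le_ofReal_iff hI0).mp h1
    have h3 : (ρ q) ^ 2 ≤ I / μ := by
      rw [le_div_iff₀ hμ]; nlinarith [ρ_nonneg q]
    calc ρ q = Real.sqrt ((ρ q) ^ 2) := (Real.sqrt_sq (ρ_nonneg q)).symm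
      _ ≤ Real.sqrt (I / μ) := Real.sqrt_le_sqrt h3
  obtain ⟨S, hSE, hSdisj, hScov⟩ :=
    Vitali.exists_disjoint_subfamily_covering_enlargement_closedBall E c ρ
      (Real.sqrt (I / μ)) rad_le 4 (by norm_num)
  have ρ_pos : ∀ q ∈ E, 0 < ρ q := by
    intro q hq
    have : q.1 - q.2 ≠ 0 := sub_ne_zero.mpr hq.1
    rw [hρ]
    positivity
  have ν_pos : ∀ q ∈ E, 0 < ν (closedBall (c q) (ρ q)) := by
    intro q hq
    refine lt_of_lt_of_le ?_ (mass q hq)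
    rw [ENNReal.ofReal_pos]
    have := ρ_pos q hq
    positivity
  haveI hfin : IsFiniteMeasure ν := ⟨by rw [ν_univ]; exact ENNReal.ofReal_lt_top⟩
  have hcount : S.Countable := by
    have hps : Pairwise (Function.onFun Disjoint fun i : S => closedBall (c i) (ρ i)) := by
      intro i j hij
      exact hSdisj i.2 j.2 (fun h => hij (Subtype.ext h))
    have hcs := MeasureTheory.Measure.countable_meas_pos_of_disjoint_iUnion (μ := ν)
      (As := fun i : S => closedBall (c i.1) (ρ i.1))
      (fun i => measurableSet_closedBall) hps
    have huniv : {i : S | 0 < ν (closedBall (c i.1) (ρ i.1))} = univ :=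
      eq_univ_of_forall fun i => ν_pos i.1 (hSE i.2)
    rw [huniv, Set.countable_univ_iff] at hcs
    exact Set.countable_coe_iff.mp hcs
  have cover : E ⊆ ⋃ b ∈ S, (closedBall (c b) (4 * ρ b)) ×ˢ (closedBall (c b) (4 * ρ b)) := by
    intro q hq
    obtain ⟨b, hbS, hsub⟩ := hScov q hq
    have hq1 : q.1 ∈ closedBall (c q) (ρ q) := by
      rw [mem_closedBall, Real.dist_eq, hρ, hc]
      rw [show q.1 - (q.1 + q.2) / 2 = (q.1 - q.2) / 2 by ring, abs_div, abs_two]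
    have hq2 : q.2 ∈ closedBall (c q) (ρ q) := by
      rw [mem_closedBall, Real.dist_eq, hρ, hc]
      rw [show q.2 - (q.1 + q.2) / 2 = (q.2 - q.1) / 2 by ring, abs_div, abs_two,
        abs_sub_comm]
    exact mem_iUnion₂.mpr ⟨b, hbS, mem_prod.mpr ⟨hsub hq1, hsub hq2⟩⟩
  calc volume E
      ≤ volume (⋃ b ∈ S, (closedBall (c b) (4 * ρ b)) ×ˢ (closedBall (c b) (4 * ρ b))) :=
        measure_mono cover
    _ ≤ ∑' b : S, volume ((closedBall (c b.1) (4 * ρ b.1)) ×ˢ (closedBall (c b.1) (4 * ρ b.1))) :=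
        measure_biUnion_le volume hcount _
    _ ≤ ∑' b : S, ENNReal.ofReal (16 / μ) * ν (closedBall (c b.1) (ρ b.1)) := by
        refine ENNReal.tsum_le_tsum fun b => ?_
        have hb : (b : ℝ × ℝ) ∈ E := hSE b.2
        have h64 : volume ((closedBall (c b.1) (4 * ρ b.1)) ×ˢ (closedBall (c b.1) (4 * ρ b.1)))
            = ENNReal.ofReal (16 / μ) * ENNReal.ofReal (μ * (2 * ρ b.1) ^ 2) := by
          rw [Measure.volume_eq_prod ℝ ℝ, Measure.prod_prod, Real.volume_closedBall,
            ← ENNReal.ofReal_mul (by positivity), ← ENNReal.ofReal_mul (by positivity)]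
          congr 1
          field_simp
          ring
        rw [h64]
        exact mul_le_mul_right (mass b.1 hb) _
    _ = ENNReal.ofReal (16 / μ) * ∑' b : S, ν (closedBall (c b.1) (ρ b.1)) :=
        ENNReal.tsum_mul_left
    _ = ENNReal.ofReal (16 / μ) * ν (⋃ b ∈ S, closedBall (c b) (ρ b)) := by
        rw [measure_biUnion hcount hSdisj (fun b _ => measurableSet_closedBall)]
    _ ≤ ENNReal.ofReal (16 / μ) * ν univ := mul_le_mul_right (measure_mono (subset_univ _)) _
    _ = ENNReal.ofReal (16 * I / μ) := by
        rw [ν_univ, ← ENNReal.ofReal_mul (by positivity)]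
        congr 1
        ring

theorem abs_sub_le_int (u : ℝ → ℝ) (hu : ContDiff ℝ (⊤ : ℕ∞) u) (hs : HasCompactSupport u)
    (x y : ℝ) : |u x - u y| ≤ ∫ t, |deriv u t| := by
  have hgc : Continuous (deriv u) := hu.continuous_deriv (by simp)
  have hgi : Integrable (deriv u) := hgc.integrable_of_hasCompactSupport hs.deriv
  wlog h : y ≤ x generalizing x y
  · rw [abs_sub_comm]; exact this y x (le_of_not_ge h)
  have ftc : u x - u y = ∫ t in y..x, deriv u t :=
    (intervalIntegral.integral_deriv_eq_sub
      (fun t _ => (hu.differentiable (by simp)).differentiableAt) (hgc.intervalIntegrable y x)).symm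
  calc |u x - u y| ≤ ∫ t in y..x, |deriv u t| := by
        rw [ftc]; exact intervalIntegral.abs_integral_le_integral_abs h
    _ = ∫ t in Set.Ioc y x, |deriv u t| := intervalIntegral.integral_of_le h
    _ ≤ ∫ t, |deriv u t| :=
        setIntegral_le_integral hgi.abs (Filter.Eventually.of_forall fun t => abs_nonneg _)

/-- Weak-type substitute in dimension 1: there is a universal constant `C` such that for all
`1 < p < ∞` and `u ∈ C^∞_c(ℝ)`,
`sup_{λ>0} λ 𝓛²({(x,y) : |u(x)-u(y)| ≥ λ|x-y|^{2/p}})^{1/p} ≤ C ∫ |u'|`. -/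
theorem weak_substitute_dim_one :
    ∃ C : ℝ, 0 < C ∧ ∀ p : ℝ, 1 < p → ∀ u : ℝ → ℝ, ContDiff ℝ (⊤ : ℕ∞) u → HasCompactSupport u →
      ∀ l : ℝ, 0 < l →
        l * (volume {q : ℝ × ℝ | q.1 ≠ q.2 ∧
              |u q.1 - u q.2| ≥ l * |q.1 - q.2| ^ (2 / p)}).toReal ^ (1 / p)
          ≤ C * ∫ t, |deriv u t| := by
  refine ⟨16, by norm_num, ?_⟩
  intro p hp u hu hs l hl
  set I : ℝ := ∫ t, |deriv u t| with hI
  have hI0 : 0 ≤ I := integral_nonneg fun t => abs_nonneg _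
  have hp0 : (0 : ℝ) < p := lt_trans one_pos hp
  rcases eq_or_lt_of_le hI0 with h0 | hIpos
  · have hempty : {q : ℝ × ℝ | q.1 ≠ q.2 ∧ |u q.1 - u q.2| ≥ l * |q.1 - q.2| ^ (2 / p)} = ∅ := by
      ext q
      simp only [Set.mem_setOf_eq, Set.mem_empty_iff_false, iff_false, not_and]
      intro hne hge
      have h1 : 0 < |q.1 - q.2| := abs_pos.mpr (sub_ne_zero.mpr hne)
      have h2 : 0 < l * |q.1 - q.2| ^ (2 / p) := by
        have := Real.rpow_pos_of_pos h1 (2 / p)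
        positivity
      have h3 : |u q.1 - u q.2| ≤ I := abs_sub_le_int u hu hs q.1 q.2
      linarith
    rw [hempty]
    simp only [measure_empty, ENNReal.toReal_zero]
    rw [Real.zero_rpow (by positivity)]
    rw [mul_zero, ← h0, mul_zero]
  · set μ : ℝ := l ^ p * I ^ (1 - p) with hμ
    have hμpos : 0 < μ := by
      have := Real.rpow_pos_of_pos hl p
      have := Real.rpow_pos_of_pos hIpos (1 - p)
      positivity
    have hsub : {q : ℝ × ℝ | q.1 ≠ q.2 ∧ |u q.1 - u q.2| ≥ l * |q.1 - q.2| ^ (2 / p)}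
        ⊆ {q : ℝ × ℝ | q.1 ≠ q.2 ∧ |u q.1 - u q.2| ≥ μ * (q.1 - q.2) ^ 2} := by
      rintro q ⟨hne, hge⟩
      refine ⟨hne, ?_⟩
      set d : ℝ := |u q.1 - u q.2| with hd
      set A : ℝ := |q.1 - q.2| with hA
      have hApos : 0 < A := abs_pos.mpr (sub_ne_zero.mpr hne)
      have hdpos : 0 < d := lt_of_lt_of_le (by
        have := Real.rpow_pos_of_pos hApos (2 / p)
        positivity) hge
      have hdI : d ≤ I := abs_sub_le_int u hu hs q.1 q.2
      have hA2 : A ^ (2 / p) ≤ d / l := (le_div_iff₀ hl).mpr (by linarith [hge])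
      have hsq : (q.1 - q.2) ^ 2 = A ^ (2 : ℝ) := by
        rw [← sq_abs, ← hA, ← Real.rpow_natCast A 2]
        norm_num
      have hA2p : A ^ (2 : ℝ) ≤ (d / l) ^ p := by
        have : A ^ (2 : ℝ) = (A ^ (2 / p)) ^ p := by
          rw [← Real.rpow_mul hApos.le]
          congr 1
          field_simp
        rw [this]
        exact Real.rpow_le_rpow (Real.rpow_nonneg hApos.le _) hA2 hp0.le
      have hdp : d ^ p = d ^ (p - 1) * d := by
        rw [← Real.rpow_add_one hdpos.ne' (p - 1)]
        congr 1
        ring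
      have hdIp : d ^ (p - 1) ≤ I ^ (p - 1) :=
        Real.rpow_le_rpow hdpos.le hdI (by linarith)
      have hII : I ^ (1 - p) * I ^ (p - 1) = 1 := by
        rw [← Real.rpow_add hIpos]
        norm_num
      have hdiv : (d / l) ^ p = d ^ p / l ^ p := Real.div_rpow hdpos.le hl.le p
      have hlp : 0 < l ^ p := Real.rpow_pos_of_pos hl p
      have hIp1 : 0 < I ^ (1 - p) := Real.rpow_pos_of_pos hIpos _
      have hd1 : 0 < d ^ (p - 1) := Real.rpow_pos_of_pos hdpos _
      calc μ * (q.1 - q.2) ^ 2 = l ^ p * I ^ (1 - p) * A ^ (2 : ℝ) := by rw [hsq, hμ]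
        _ ≤ l ^ p * I ^ (1 - p) * ((d / l) ^ p) := by
            have : 0 ≤ l ^ p * I ^ (1 - p) := by positivity
            exact mul_le_mul_of_nonneg_left hA2p this
        _ = I ^ (1 - p) * d ^ (p - 1) * d := by
            rw [hdiv, hdp]
            field_simp
        _ ≤ I ^ (1 - p) * I ^ (p - 1) * d := by
            have : I ^ (1 - p) * d ^ (p - 1) ≤ I ^ (1 - p) * I ^ (p - 1) :=
              mul_le_mul_of_nonneg_left hdIp hIp1.le
            exact mul_le_mul_of_nonneg_right this hdpos.le
        _ = d := by rw [hII, one_mul]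
    have hvol := (measure_mono hsub).trans (quad_bound u hu hs μ hμpos)
    have heq : 16 * I / μ = 16 * I ^ p / l ^ p := by
      have hIp : 0 < I ^ p := Real.rpow_pos_of_pos hIpos p
      have hlp : 0 < l ^ p := Real.rpow_pos_of_pos hl p
      have hIp1 : 0 < I ^ (1 - p) := Real.rpow_pos_of_pos hIpos _
      have hkey : I ^ (1 - p) * I ^ p = I := by
        rw [← Real.rpow_add hIpos]
        norm_num
      rw [hμ, div_eq_div_iff (by positivity) hlp.ne']
      calc 16 * I * l ^ p = 16 * (I ^ (1 - p) * I ^ p) * l ^ p := by rw [hkey]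
        _ = 16 * I ^ p * (l ^ p * I ^ (1 - p)) := by ring
    rw [heq] at hvol
    have hIp : 0 < I ^ p := Real.rpow_pos_of_pos hIpos p
    have hlp : 0 < l ^ p := Real.rpow_pos_of_pos hl p
    have htr : (volume {q : ℝ × ℝ | q.1 ≠ q.2 ∧
        |u q.1 - u q.2| ≥ l * |q.1 - q.2| ^ (2 / p)}).toReal ≤ 16 * I ^ p / l ^ p :=
      ENNReal.toReal_le_of_le_ofReal (by positivity) hvol
    have hrpow : ((volume {q : ℝ × ℝ | q.1 ≠ q.2 ∧
        |u q.1 - u q.2| ≥ l * |q.1 - q.2| ^ (2 / p)}).toReal) ^ (1 / p)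
        ≤ (16 * I ^ p / l ^ p) ^ (1 / p) :=
      Real.rpow_le_rpow ENNReal.toReal_nonneg htr (by positivity)
    have hval : (16 * I ^ p / l ^ p) ^ (1 / p) = (16 : ℝ) ^ (1 / p) * I / l := by
      rw [Real.div_rpow (by positivity) hlp.le, Real.mul_rpow (by norm_num) hIp.le,
        ← Real.rpow_mul hIpos.le, ← Real.rpow_mul hl.le,
        mul_one_div_cancel hp0.ne', Real.rpow_one, Real.rpow_one]
    have h16 : (16 : ℝ) ^ (1 / p) ≤ 16 := by
      calc (16 : ℝ) ^ (1 / p)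
          ≤ (16 : ℝ) ^ (1 : ℝ) := Real.rpow_le_rpow_of_exponent_le (by norm_num)
            ((div_le_one hp0).mpr (by linarith))
        _ = 16 := Real.rpow_one 16
    calc l * (volume {q : ℝ × ℝ | q.1 ≠ q.2 ∧
          |u q.1 - u q.2| ≥ l * |q.1 - q.2| ^ (2 / p)}).toReal ^ (1 / p)
        ≤ l * ((16 : ℝ) ^ (1 / p) * I / l) := by
          rw [← hval]
          exact mul_le_mul_of_nonneg_left hrpow hl.le
      _ = (16 : ℝ) ^ (1 / p) * I := by field_simp
      _ ≤ 16 * I := mul_le_mul_of_nonneg_right h16 hI0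
end
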